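/- arXiv:math/0308280 — 7 statements merged into one kernel-verified Lean document; each statement's English description precedes it below -/
import Mathlib

section
/- Let G be a finite simple graph with vertex set V, and let B be a finite set of integer tables u : {0,1}^V → ℤ with π_G(u) = 0 for every u ∈ B. Then B is a Markov basis for G if and only if the set of binomials {p^{u⁺} − p^{u⁻} : u ∈ B} generates the toric ideal I_G. -/
open MvPolynomial Finset

namespace BinaryGraphModels

variable {V : Type} [Fintype V] [DecidableEq V]

/-- The monomial map `φ_G` of the binary graph model: the variable `p_I` is sent to the
product over edges `{j,k}` of the variable `t^{jk}_{I(j)I(k)}` (encoded as the unordered pair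
`{(j, I j), (k, I k)}`) times the product over isolated vertices `l` of `t^{l}_{I(l)}`. -/
noncomputable def phi (G : SimpleGraph V) :
    MvPolynomial (V → Bool) ℂ →ₐ[ℂ] MvPolynomial (Sym2 (V × Bool) ⊕ (V × Bool)) ℂ := by
  letI : DecidableRel G.Adj := Classical.decRel _
  exact aeval fun I : V → Bool =>
    (∏ e ∈ G.edgeFinset,
      (X (Sum.inl (Sym2.map (fun v => (v, I v)) e)) :
        MvPolynomial (Sym2 (V × Bool) ⊕ (V × Bool)) ℂ)) *
    ∏ l ∈ univ.filter (fun l : V => ∀ k, ¬ G.Adj l k), X (Sum.inr (l, I l))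

/-- The toric ideal `I_G` of the binary graph model of `G`. -/
noncomputable def toricIdeal (G : SimpleGraph V) : Ideal (MvPolynomial (V → Bool) ℂ) :=
  RingHom.ker (phi G).toRingHom

/-- `I_G` is generated in degree at most `d`. -/
def GenInDegLE (G : SimpleGraph V) (d : ℕ) : Prop :=
  toricIdeal G =
    Ideal.span {f : MvPolynomial (V → Bool) ℂ | f ∈ toricIdeal G ∧ f.totalDegree ≤ d}

/-- The Markov width `μ(G)`: the least `d` such that `I_G` is generated in degree `≤ d`. -/
noncomputable def markovWidth (G : SimpleGraph V) : ℕ :=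
  sInf {d : ℕ | GenInDegLE G d}

/-- `f` is a minimal generator of `I_G`, i.e. `f ∈ I_G` and `f ∉ 𝔪 · I_G` where `𝔪` is the
irrelevant maximal ideal generated by all the variables. -/
def IsMinimalGenerator (G : SimpleGraph V) (f : MvPolynomial (V → Bool) ℂ) : Prop :=
  f ∈ toricIdeal G ∧
    f ∉ Ideal.span (Set.range (X : (V → Bool) → MvPolynomial (V → Bool) ℂ)) * toricIdeal G

/-- Two integer tables have the same `G`-marginals: equal two-way marginals along every edge
and equal one-way marginals at every isolated vertex. -/
def MarginalsEq (G : SimpleGraph V) (v₁ v₂ : (V → Bool) → ℤ) : Prop :=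
  (∀ j k : V, G.Adj j k → ∀ a b : Bool,
    (∑ I : V → Bool, if I j = a ∧ I k = b then v₁ I else 0) =
    (∑ I : V → Bool, if I j = a ∧ I k = b then v₂ I else 0)) ∧
  (∀ l : V, (∀ k, ¬ G.Adj l k) → ∀ a : Bool,
    (∑ I : V → Bool, if I l = a then v₁ I else 0) =
    (∑ I : V → Bool, if I l = a then v₂ I else 0))

/-- `B` is a Markov basis for `G`: any two nonnegative tables with the same `G`-marginals are
connected by a path of moves from `±B` staying nonnegative. -/
def IsMarkovBasis (G : SimpleGraph V) (B : Finset ((V → Bool) → ℤ)) : Prop :=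
  ∀ v₁ v₂ : (V → Bool) → ℤ, (∀ I, 0 ≤ v₁ I) → (∀ I, 0 ≤ v₂ I) →
    MarginalsEq G v₁ v₂ →
    ∃ L : List ((V → Bool) → ℤ),
      (∀ u ∈ L, u ∈ B ∨ -u ∈ B) ∧
      v₁ + L.sum = v₂ ∧
      ∀ n : ℕ, n ≤ L.length → ∀ I, 0 ≤ (v₁ + (L.take n).sum) I

/-- The binomial `p^{u⁺} - p^{u⁻}` associated to an integer table `u`. -/
noncomputable def moveBinomial (u : (V → Bool) → ℤ) : MvPolynomial (V → Bool) ℂ :=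
  (∏ I : V → Bool, X I ^ (u I).toNat) - ∏ I : V → Bool, X I ^ (-u I).toNat

end BinaryGraphModels

/-!
Under `φ_G` the monomial `p^m` goes to a monomial whose exponent records the `G`-marginals of `m`.
A linear map sending monomials to monomials has its kernel spanned by the binomials `p^a - p^b`
with `a`, `b` in a common fiber, so `I_G` is spanned by such binomials with equal marginals.
Connectivity by moves of `±B` is an additive congruence on nonnegative tables, and `p^a - p^b`
lies in the ideal generated by the binomials of `B` exactly when `a` and `b` are connected: one
way telescopes along a path, each step being a monomial multiple of a binomial of `B`; the other
maps the polynomial ring onto the monoid algebra of the quotient by connectivity, which kills the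
binomials of `B` but separates distinct classes.
-/

namespace MvPolynomial

variable {σ τ R : Type*} [CommRing R]

theorem ker_eq_span_monomial_sub_monomial (φ : MvPolynomial σ R →ₗ[R] MvPolynomial τ R)
    (F : (σ →₀ ℕ) → τ →₀ ℕ) (hφ : ∀ m, φ (monomial m 1) = monomial (F m) 1) :
    LinearMap.ker φ =
      Submodule.span R {p | ∃ m m', F m = F m' ∧ p = monomial m 1 - monomial m' 1} := by
  refine le_antisymm (fun p hp => ?_) (Submodule.span_le.mpr ?_)
  · -- subtracting the image of `q` under `φ`, pulled back along a section of `F`, leaves a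
    -- combination of binomials; for `q ∈ ker φ` nothing is subtracted
    have retract : ∀ q, q - AddMonoidAlgebra.mapDomain (Function.invFun F) (φ q) ∈
        Submodule.span R {p | ∃ m m', F m = F m' ∧ p = monomial m 1 - monomial m' 1} := by
      intro q
      induction q using MvPolynomial.induction_on' with
      | monomial m c =>
        have hφc : φ (monomial m c) = monomial (F m) c := by
          rw [← mul_one c, ← smul_eq_mul, ← smul_monomial, map_smul, hφ, smul_monomial]
        have : monomial m c - AddMonoidAlgebra.mapDomain (Function.invFun F) (φ (monomial m c)) =
            c • (monomial m 1 - monomial (Function.invFun F (F m)) 1) := by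
          rw [hφc, ← single_eq_monomial (F m), AddMonoidAlgebra.mapDomain_single]
          simp [smul_sub, smul_monomial, single_eq_monomial]
        rw [this]
        exact Submodule.smul_mem _ _
          (Submodule.subset_span ⟨_, _, (Function.invFun_eq ⟨m, rfl⟩).symm, rfl⟩)
      | add p q hp hq =>
        rw [map_add, AddMonoidAlgebra.mapDomain_add]
        convert add_mem hp hq using 1
        abel
    simpa [LinearMap.mem_ker.mp hp] using retract p
  · rintro _ ⟨m, m', h, rfl⟩
    simp [hφ, h]

end MvPolynomial

namespace BinaryGraphModels

section MarkovMoves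

variable {ι : Type*}

def MarkovStep (B : Set (ι → ℤ)) (a b : ι →₀ ℕ) : Prop :=
  ∃ u, (u ∈ B ∨ -u ∈ B) ∧ ∀ i, (a i : ℤ) + u i = b i

variable {B : Set (ι → ℤ)}

instance : Std.Symm (MarkovStep B) where
  symm _ _ := fun ⟨u, hu, h⟩ =>
    ⟨-u, by rwa [neg_neg, or_comm], fun i => by rw [Pi.neg_apply]; linarith [h i]⟩

theorem MarkovStep.add_right {a b : ι →₀ ℕ} (c : ι →₀ ℕ) (h : MarkovStep B a b) :
    MarkovStep B (a + c) (b + c) :=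
  let ⟨u, hu, h⟩ := h
  ⟨u, hu, fun i => by simp only [Finsupp.coe_add, Pi.add_apply]; grind⟩

def markovCon (B : Set (ι → ℤ)) : AddCon (ι →₀ ℕ) where
  r := Relation.ReflTransGen (MarkovStep B)
  iseqv := ⟨fun _ => .refl, symm_of _, .trans⟩
  add' {a b c d} hab hcd :=
    (hab.lift (· + c) fun _ _ h => h.add_right c).trans <| by
      simpa only [add_comm b] using hcd.lift (· + b) fun _ _ h => h.add_right b

variable [Finite ι]

/-- `toNatFinsupp u` and `toNatFinsupp (-u)` are the tables `u⁺` and `u⁻`. -/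
noncomputable def toNatFinsupp (v : ι → ℤ) : ι →₀ ℕ :=
  Finsupp.equivFunOnFinite.symm fun i => (v i).toNat

@[simp]
theorem toNatFinsupp_apply (v : ι → ℤ) (i : ι) : toNatFinsupp v i = (v i).toNat := rfl

theorem natCast_toNatFinsupp {v : ι → ℤ} (hv : ∀ i, 0 ≤ v i) :
    (fun i => (toNatFinsupp v i : ℤ)) = v :=
  funext fun i => by simp [hv i]

theorem reflTransGen_markovStep_iff {a b : ι →₀ ℕ} :
    Relation.ReflTransGen (MarkovStep B) a b ↔
      ∃ L : List (ι → ℤ), (∀ u ∈ L, u ∈ B ∨ -u ∈ B) ∧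
        (fun i => (a i : ℤ)) + L.sum = (fun i => (b i : ℤ)) ∧
        ∀ n ≤ L.length, ∀ i, 0 ≤ ((fun i => (a i : ℤ)) + (L.take n).sum) i := by
  constructor
  · intro h
    induction h using Relation.ReflTransGen.head_induction_on with
    | refl => exact ⟨[], by simp, by simp, fun n hn i => by simp [Nat.le_zero.mp hn]⟩
    | head hac _ ih =>
      obtain ⟨u, hu, hac⟩ := hac
      obtain ⟨L, hL, hsum, hnonneg⟩ := ih
      have hstart : (fun i => (_ : ℤ)) + u = _ := funext hac
      refine ⟨u :: L, ?_, ?_, ?_⟩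
      · simpa [hu] using hL
      · rw [List.sum_cons, ← add_assoc, hstart, hsum]
      · rintro (_ | n) hn i
        · simp
        · rw [List.take_succ_cons, List.sum_cons, ← add_assoc, hstart]
          exact hnonneg n (by simpa using hn) i
  · rintro ⟨L, hL, hsum, hnonneg⟩
    induction L generalizing a with
    | nil =>
      have : a = b := Finsupp.ext fun i => by simpa using congrFun hsum i
      exact this ▸ .refl
    | cons u L ih =>
      have hc := natCast_toNatFinsupp (v := (fun i => (a i : ℤ)) + u)
        (by simpa using hnonneg 1 (by simp))
      refine .head ⟨u, (hL u (by simp)), fun i => congrFun hc.symm i⟩ (ih ?_ ?_ ?_)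
      · exact fun v hv => hL v (by simp [hv])
      · rw [hc, add_assoc, ← List.sum_cons, hsum]
      · intro n hn i
        rw [hc, add_assoc, ← List.sum_cons, ← List.take_succ_cons]
        exact hnonneg (n + 1) (by simpa using hn) i

noncomputable def binomial (R : Type*) [CommRing R] (u : ι → ℤ) : MvPolynomial ι R :=
  monomial (toNatFinsupp u) 1 - monomial (toNatFinsupp (-u)) 1

variable {R : Type*} [CommRing R]

theorem monomial_sub_monomial_eq_mul_binomial {u : ι → ℤ} {a b : ι →₀ ℕ}
    (h : ∀ i, (a i : ℤ) + u i = b i) :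
    (monomial b 1 - monomial a 1 : MvPolynomial ι R) = monomial (a ⊓ b) 1 * binomial R u := by
  have hb : b = a ⊓ b + toNatFinsupp u := Finsupp.ext fun i => by simp; grind
  have ha : a = a ⊓ b + toNatFinsupp (-u) := Finsupp.ext fun i => by simp; grind
  rw [binomial, mul_sub, monomial_mul, monomial_mul, one_mul, ← ha, ← hb]

theorem monomial_sub_mem_span_binomial_of_markovStep {a b : ι →₀ ℕ} (h : MarkovStep B a b) :
    (monomial a 1 - monomial b 1 : MvPolynomial ι R) ∈ Ideal.span (binomial R '' B) := by
  obtain ⟨u, hu | hu, h⟩ := h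
  · rw [← neg_sub, monomial_sub_monomial_eq_mul_binomial h]
    exact neg_mem (Ideal.mul_mem_left _ _ (Ideal.subset_span ⟨u, hu, rfl⟩))
  · rw [monomial_sub_monomial_eq_mul_binomial (u := -u) fun i => by simp; linarith [h i]]
    exact Ideal.mul_mem_left _ _ (Ideal.subset_span ⟨-u, hu, rfl⟩)

theorem monomial_sub_mem_span_binomial_iff [Nontrivial R] {a b : ι →₀ ℕ} :
    (monomial a 1 - monomial b 1 : MvPolynomial ι R) ∈ Ideal.span (binomial R '' B) ↔
      markovCon B a b := by
  constructor
  · -- pass to the monoid algebra of the quotient by connectivity, which kills every binomial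
    let ψ := AddMonoidAlgebra.mapDomainRingHom R (markovCon B).mk'
    have hψ (m) : ψ (monomial m 1) = AddMonoidAlgebra.single (m : (markovCon B).Quotient) 1 := by
      simp [ψ, ← single_eq_monomial, AddCon.coe_mk']
    have hker : Ideal.span (binomial R '' B) ≤ RingHom.ker ψ := by
      rw [Ideal.span_le]
      rintro _ ⟨u, hu, rfl⟩
      have : MarkovStep B (toNatFinsupp u) (toNatFinsupp (-u)) :=
        ⟨-u, .inr (by rwa [neg_neg]), fun i => by simp; grind⟩
      rw [SetLike.mem_coe, RingHom.mem_ker, binomial, map_sub, hψ, hψ,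
        (AddCon.eq _).mpr (Relation.ReflTransGen.single this), sub_self]
    intro h
    have := hker h
    rw [RingHom.mem_ker, map_sub, hψ, hψ, sub_eq_zero,
      AddMonoidAlgebra.single_left_inj one_ne_zero] at this
    exact (AddCon.eq _).mp this
  · intro h
    induction h with
    | refl => simp
    | tail _ hbc ih =>
      rw [← sub_add_sub_cancel]
      exact add_mem ih (monomial_sub_mem_span_binomial_of_markovStep hbc)

theorem forall_markovCon_iff_ker_eq_span_binomial [Nontrivial R] {τ : Type*}
    (φ : MvPolynomial ι R →ₐ[R] MvPolynomial τ R) (F : (ι →₀ ℕ) → τ →₀ ℕ)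
    (hφ : ∀ m, φ (monomial m 1) = monomial (F m) 1)
    (hB : ∀ u ∈ B, F (toNatFinsupp u) = F (toNatFinsupp (-u))) :
    (∀ a b, F a = F b → markovCon B a b) ↔ RingHom.ker φ = Ideal.span (binomial R '' B) := by
  constructor
  · intro hconn
    refine le_antisymm (fun p hp => ?_) (Ideal.span_le.mpr ?_)
    · have hp' : p ∈ LinearMap.ker φ.toLinearMap := hp
      rw [ker_eq_span_monomial_sub_monomial φ.toLinearMap F hφ] at hp'
      refine (Submodule.span_le (p := (Ideal.span (binomial R '' B)).restrictScalars R)).mpr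
        ?_ hp'
      rintro _ ⟨m, m', hm, rfl⟩
      exact monomial_sub_mem_span_binomial_iff.mpr (hconn m m' hm)
    · rintro _ ⟨u, hu, rfl⟩
      simp [binomial, hφ, hB u hu]
  · intro hker a b hab
    rw [← monomial_sub_mem_span_binomial_iff (R := R), ← hker]
    simp [hφ, hab]

end MarkovMoves

section GraphModel

variable {V : Type} [Fintype V] (G : SimpleGraph V)

noncomputable def phiExponent (I : V → Bool) : Sym2 (V × Bool) ⊕ (V × Bool) →₀ ℕ := by
  -- the decidability instance of `phi`, so that `phi_X` holds after unfolding both sides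
  letI : DecidableRel G.Adj := Classical.decRel _
  exact (∑ e ∈ G.edgeFinset, Finsupp.single (Sum.inl (Sym2.map (fun v => (v, I v)) e)) 1) +
    ∑ l ∈ univ.filter (fun l : V => ∀ k, ¬ G.Adj l k), Finsupp.single (Sum.inr (l, I l)) 1

noncomputable def tableExponent (m : (V → Bool) →₀ ℕ) :
    Sym2 (V × Bool) ⊕ (V × Bool) →₀ ℕ :=
  m.sum fun I k => k • phiExponent G I

theorem phi_X (I : V → Bool) : phi G (X I) = monomial (phiExponent G I) 1 := by
  have hX : ∀ t, (X t : MvPolynomial (Sym2 (V × Bool) ⊕ (V × Bool)) ℂ) =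
      monomial (Finsupp.single t 1) 1 := fun _ => rfl
  rw [phi, phiExponent]
  simp only [aeval_X, hX, ← monomial_sum_one, monomial_mul, mul_one]

theorem phi_monomial (m : (V → Bool) →₀ ℕ) :
    phi G (monomial m 1) = monomial (tableExponent G m) 1 := by
  rw [monomial_eq, C_1, one_mul, map_finsuppProd]
  simp only [map_pow, phi_X, monomial_pow, one_pow, tableExponent, monomial_finsupp_sum_index,
    C_1, one_mul]

theorem phiExponent_inl [DecidableRel G.Adj] (I : V → Bool) (j k : V) (α β : Bool) :
    phiExponent G I (.inl s((j, α), (k, β))) =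
      if G.Adj j k ∧ I j = α ∧ I k = β then 1 else 0 := by
  classical
  have hmap (e : Sym2 V) :
      Sym2.map (fun v => (v, I v)) e = s((j, α), (k, β)) ↔
        e = s(j, k) ∧ I j = α ∧ I k = β := by
    induction e using Sym2.ind with
    | _ x y => simp only [Sym2.map_mk, Sym2.eq_iff, Prod.ext_iff]; grind
  by_cases hI : I j = α ∧ I k = β
  · simp [phiExponent, Finsupp.single_apply, hmap, hI]
  · simp [phiExponent, hmap, hI]

theorem phiExponent_inr [DecidableRel G.Adj] (I : V → Bool) (l : V) (α : Bool) :
    phiExponent G I (.inr (l, α)) = if (∀ k, ¬ G.Adj l k) ∧ I l = α then 1 else 0 := by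
  classical
  have hpair (l' : V) : (l', I l') = (l, α) ↔ l' = l ∧ I l = α := by
    simp only [Prod.ext_iff]; grind
  by_cases hI : I l = α
  · simp [phiExponent, Finsupp.single_apply, hpair, hI]
  · simp [phiExponent, hpair, hI]

variable [DecidableEq V]

theorem tableExponent_apply (m : (V → Bool) →₀ ℕ) (t : Sym2 (V × Bool) ⊕ (V × Bool)) :
    tableExponent G m t = ∑ I, m I * phiExponent G I t := by
  simp [tableExponent, Finsupp.sum_fintype, Finsupp.finsetSum_apply]

theorem tableExponent_inl [DecidableRel G.Adj] (m : (V → Bool) →₀ ℕ) (j k : V)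
    (α β : Bool) :
    tableExponent G m (.inl s((j, α), (k, β))) =
      if G.Adj j k then ∑ I, if I j = α ∧ I k = β then m I else 0 else 0 := by
  split_ifs with h <;> simp [tableExponent_apply, phiExponent_inl, h]

theorem tableExponent_inr [DecidableRel G.Adj] (m : (V → Bool) →₀ ℕ) (l : V) (α : Bool) :
    tableExponent G m (.inr (l, α)) =
      if ∀ k, ¬ G.Adj l k then ∑ I, if I l = α then m I else 0 else 0 := by
  split_ifs with h <;> simp [tableExponent_apply, phiExponent_inr, h]

theorem marginalsEq_natCast_iff (a b : (V → Bool) →₀ ℕ) :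
    MarginalsEq G (fun I => (a I : ℤ)) (fun I => (b I : ℤ)) ↔
      tableExponent G a = tableExponent G b := by
  classical
  simp only [MarginalsEq, Finsupp.ext_iff, Sum.forall, Sym2.forall, Prod.forall, tableExponent_inl,
    tableExponent_inr]
  constructor
  · rintro ⟨hedge, hiso⟩
    refine ⟨fun j α k β => ?_, fun l α => ?_⟩ <;> split_ifs with h
    · exact_mod_cast hedge j k h α β
    · rfl
    · exact_mod_cast hiso l h α
    · rfl
  · rintro ⟨hedge, hiso⟩
    refine ⟨fun j k h α β => ?_, fun l h α => ?_⟩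
    · have := hedge j α k β
      rw [if_pos h, if_pos h] at this
      exact_mod_cast this
    · have := hiso l α
      rw [if_pos h, if_pos h] at this
      exact_mod_cast this

theorem marginalsEq_iff_sub (v w : (V → Bool) → ℤ) :
    MarginalsEq G v w ↔ MarginalsEq G (v - w) 0 := by
  simp [MarginalsEq, ← Finset.sum_filter, Finset.sum_sub_distrib, sub_eq_zero]

theorem marginalsEq_toNatFinsupp {u : (V → Bool) → ℤ} (hu : MarginalsEq G u 0) :
    MarginalsEq G (fun I => (toNatFinsupp u I : ℤ)) (fun I => (toNatFinsupp (-u) I : ℤ)) := by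
  rw [marginalsEq_iff_sub]
  convert hu
  ext I
  simp

theorem isMarkovBasis_iff (B : Finset ((V → Bool) → ℤ)) :
    IsMarkovBasis G B ↔ ∀ a b : (V → Bool) →₀ ℕ,
      MarginalsEq G (fun I => (a I : ℤ)) (fun I => (b I : ℤ)) →
        markovCon (B : Set ((V → Bool) → ℤ)) a b := by
  constructor
  · intro h a b hab
    exact reflTransGen_markovStep_iff.mpr
      (h _ _ (fun _ => by positivity) (fun _ => by positivity) hab)
  · intro h v₁ v₂ h₁ h₂ hv
    rw [← natCast_toNatFinsupp h₁, ← natCast_toNatFinsupp h₂] at hv ⊢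
    exact reflTransGen_markovStep_iff.mp (h _ _ hv)

theorem moveBinomial_eq_binomial (u : (V → Bool) → ℤ) : moveBinomial u = binomial ℂ u := by
  have hmono (v : (V → Bool) → ℤ) :
      monomial (toNatFinsupp v) (1 : ℂ) = ∏ I, X I ^ (v I).toNat := by
    rw [monomial_eq, C_1, one_mul, Finsupp.prod_fintype _ _ fun _ => pow_zero _]
    rfl
  rw [moveBinomial, binomial, hmono, hmono]
  rfl

end GraphModel

/-- Diaconis–Sturmfels: a finite set `B` of moves (integer tables with zero
`G`-marginals) is a Markov basis for `G` if and only if the binomials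
`p^{u⁺} - p^{u⁻}`, `u ∈ B`, generate the toric ideal `I_G`. -/
theorem markovBasis_iff_span {V : Type} [Fintype V] [DecidableEq V]
    (G : SimpleGraph V) (B : Finset ((V → Bool) → ℤ))
    (hB : ∀ u ∈ B, MarginalsEq G u 0) :
    IsMarkovBasis G B ↔
      toricIdeal G = Ideal.span (moveBinomial '' (B : Set ((V → Bool) → ℤ))) := by
  have hmoves : ∀ u ∈ (B : Set _),
      tableExponent G (toNatFinsupp u) = tableExponent G (toNatFinsupp (-u)) :=
    fun u hu => (marginalsEq_natCast_iff G _ _).mp (marginalsEq_toNatFinsupp G (hB u hu))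
  have hbinomials : moveBinomial '' (B : Set ((V → Bool) → ℤ)) = binomial ℂ '' B :=
    Set.image_congr fun u _ => moveBinomial_eq_binomial u
  simp only [isMarkovBasis_iff, marginalsEq_natCast_iff, hbinomials]
  exact forall_markovCon_iff_ker_eq_span_binomial (phi G) _ (phi_monomial G) hmoves

end BinaryGraphModels
end

section
/- Let m ≥ 3 and identify index strings for K_m with elements of {0,1}^m. Let u⁺ be the nonnegative integer table with u⁺(𝟎) = m − 2 (𝟎 the all-zeros string), u⁺(𝟏 − e_i) = 1 for each i ∈ {1,…,m} (where 𝟏 − e_i is the string with 0 in position i and 1 in all other positions), and u⁺(I) = 0 for all other strings I; let u⁻ be the table with u⁻(𝟏) = m − 2 (𝟏 the all-ones string), u⁻(e_i) = 1 for each i (where e_i is the string with 1 in position i and 0 elsewhere), and 0 otherwise. Then π_{K_m}(u⁺) = π_{K_m}(u⁻), and u⁺ and u⁻ are the only nonnegative integer tables v : {0,1}^m → ℕ with π_{K_m}(v) = π_{K_m}(u⁺). -/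
open MvPolynomial Finset

namespace BinaryGraphModels

section Helpers

variable {m : ℕ}

private def eb (i : Fin m) : Fin m → Bool := fun j => decide (j = i)
private def nb (i : Fin m) : Fin m → Bool := fun j => decide (j ≠ i)

@[simp] private lemma eb_apply (i j : Fin m) : eb i j = decide (j = i) := rfl
@[simp] private lemma nb_apply (i j : Fin m) : nb i j = decide (j ≠ i) := rfl

private lemma eb_inj : Function.Injective (eb (m := m)) := by
  intro i i' h
  have h2 := congrFun h i
  simpa using h2

private lemma nb_inj : Function.Injective (nb (m := m)) := by
  intro i i' h
  have h2 := congrFun h i'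
  simp at h2
  exact h2.symm

private lemma exists_not_mem_pair (hm : 3 ≤ m) (i i' : Fin m) : ∃ q, q ≠ i ∧ q ≠ i' := by
  have hcard : ({i, i'} : Finset (Fin m)).card ≤ 2 :=
    (Finset.card_insert_le _ _).trans (by simp)
  have hpos : 0 < (({i, i'} : Finset (Fin m))ᶜ).card := by
    rw [Finset.card_compl]
    simp only [Fintype.card_fin]
    omega
  obtain ⟨q, hq⟩ := Finset.card_pos.mp hpos
  simp only [Finset.mem_compl, Finset.mem_insert, Finset.mem_singleton, not_or] at hq
  exact ⟨q, hq⟩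

private lemma exists_two_ne (hm : 3 ≤ m) (i : Fin m) : ∃ j k : Fin m, j ≠ i ∧ k ≠ i ∧ j ≠ k := by
  have hone : 1 < (({i} : Finset (Fin m))ᶜ).card := by
    rw [Finset.card_compl]
    simp only [Fintype.card_fin, Finset.card_singleton]
    omega
  obtain ⟨j, hj, k, hk, hjk⟩ := Finset.one_lt_card.mp hone
  simp only [Finset.mem_compl, Finset.mem_singleton] at hj hk
  exact ⟨j, k, hj, hk, hjk⟩

/-- Pointwise decomposition and generic marginal computation. -/
private lemma sum_marg (c : ℤ) (z₀ : Fin m → Bool) (f : Fin m → Fin m → Bool)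
    (hf : Function.Injective f) (hz : ∀ i, z₀ ≠ f i)
    (P : (Fin m → Bool) → Prop) [DecidablePred P] :
    (∑ I : Fin m → Bool, if P I then (if I = z₀ then c else if ∃ i, I = f i then 1 else 0) else 0)
      = (if P z₀ then c else 0) + ∑ i : Fin m, (if P (f i) then (1:ℤ) else 0) := by
  have hpt : ∀ I : Fin m → Bool,
      (if I = z₀ then c else if ∃ i, I = f i then (1:ℤ) else 0)
        = (if I = z₀ then c else 0) + ∑ i : Fin m, (if I = f i then (1:ℤ) else 0) := by
    intro I
    rcases eq_or_ne I z₀ with h1 | h1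
    · rw [if_pos h1, if_pos h1]
      have h2 : (∑ i : Fin m, if I = f i then (1:ℤ) else 0) = 0 :=
        Finset.sum_eq_zero fun i _ => if_neg (by rw [h1]; exact hz i)
      rw [h2, add_zero]
    · rw [if_neg h1, if_neg h1, zero_add]
      by_cases h2 : ∃ i, I = f i
      · obtain ⟨i₀, hi₀⟩ := h2
        rw [if_pos ⟨i₀, hi₀⟩]
        subst hi₀
        rw [Finset.sum_eq_single i₀ (fun i _ hne => if_neg fun h => hne (hf h).symm)
          (fun h => absurd (Finset.mem_univ i₀) h), if_pos rfl]
      · rw [if_neg h2]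
        exact (Finset.sum_eq_zero fun i _ => if_neg fun h => h2 ⟨i, h⟩).symm
  calc (∑ I : Fin m → Bool, if P I then (if I = z₀ then c else if ∃ i, I = f i then 1 else 0) else 0)
      = ∑ I ∈ Finset.univ.filter P,
          (if I = z₀ then c else if ∃ i, I = f i then (1:ℤ) else 0) := (Finset.sum_filter _ _)|>.symm
    _ = ∑ I ∈ Finset.univ.filter P,
          ((if I = z₀ then c else 0) + ∑ i : Fin m, (if I = f i then (1:ℤ) else 0)) :=
        Finset.sum_congr rfl fun I _ => hpt I
    _ = (if P z₀ then c else 0) + ∑ i : Fin m, (if P (f i) then (1:ℤ) else 0) := by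
        rw [Finset.sum_add_distrib]
        congr 1
        · rw [Finset.sum_ite_eq' (Finset.univ.filter P) z₀ (fun _ => c)]
          simp [Finset.mem_filter]
        · rw [Finset.sum_comm]
          refine Finset.sum_congr rfl fun i _ => ?_
          rw [Finset.sum_ite_eq' (Finset.univ.filter P) (f i) (fun _ => (1:ℤ))]
          simp [Finset.mem_filter]

private lemma sum_ite_one (p : Fin m → Prop) [DecidablePred p] :
    (∑ i : Fin m, if p i then (1:ℤ) else 0) = ((Finset.univ.filter p).card : ℤ) := by
  rw [← Finset.sum_filter]
  simp

private lemma card_ne_pair (hm : 3 ≤ m) {j k : Fin m} (hjk : j ≠ k) :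
    (Finset.univ.filter fun p : Fin m => p ≠ j ∧ p ≠ k).card = m - 2 := by
  have : (Finset.univ.filter fun p : Fin m => p ≠ j ∧ p ≠ k) = ({j, k} : Finset (Fin m))ᶜ := by
    ext p
    simp [not_or]
  rw [this, Finset.card_compl, Finset.card_insert_of_notMem (by simp [hjk]),
    Finset.card_singleton, Fintype.card_fin]


private lemma card_ne_pair' (hm : 3 ≤ m) {j k : Fin m} (hjk : j ≠ k) :
    (Finset.univ.filter fun i : Fin m => j ≠ i ∧ k ≠ i).card = m - 2 := by
  rw [show (Finset.univ.filter fun i : Fin m => j ≠ i ∧ k ≠ i)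
      = (Finset.univ.filter fun i : Fin m => i ≠ j ∧ i ≠ k) from by ext i; simp [ne_comm]]
  exact card_ne_pair hm hjk

private lemma cast_sub_two (hm : 3 ≤ m) : ((m - 2 : ℕ) : ℤ) = (m : ℤ) - 2 := by omega

/-- Marginals of the `u⁺`-type table. -/
private lemma marg_uplus (hm : 3 ≤ m) (w : (Fin m → Bool) → ℤ)
    (hw : ∀ I, w I = if I = (fun _ => false) then (m:ℤ) - 2 else if ∃ i, I = nb i then 1 else 0)
    {j k : Fin m} (hjk : j ≠ k) (a b : Bool) :
    (∑ I : Fin m → Bool, if I j = a ∧ I k = b then w I else 0)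
      = if a = b then (m:ℤ) - 2 else 1 := by
  have hz : ∀ i : Fin m, (fun _ => false : Fin m → Bool) ≠ nb i := by
    intro i h
    obtain ⟨q, hq, -⟩ := exists_not_mem_pair hm i i
    have h2 := congrFun h q
    simp [hq] at h2
  simp only [hw]
  rw [sum_marg ((m:ℤ) - 2) (fun _ => false) nb nb_inj hz (fun I => I j = a ∧ I k = b)]
  cases a <;> cases b
  · -- FF
    rw [if_pos ⟨rfl, rfl⟩, if_pos rfl]
    have h1 : (∑ i : Fin m, if nb i j = false ∧ nb i k = false then (1:ℤ) else 0) = 0 :=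
      Finset.sum_eq_zero fun i _ => by
        refine if_neg fun h => ?_
        simp only [nb_apply, decide_eq_false_iff_not, not_not] at h
        exact hjk (h.1.trans h.2.symm)
    rw [h1, add_zero]
  · -- FT
    rw [if_neg (by simp), if_neg (by simp), zero_add]
    rw [Finset.sum_eq_single j]
    · simp [hjk.symm]
    · intro i _ hne
      refine if_neg fun h => ?_
      simp only [nb_apply, decide_eq_false_iff_not, not_not, decide_eq_true_eq] at h
      exact hne h.1.symm
    · intro h; exact absurd (Finset.mem_univ j) h
  · -- TF
    rw [if_neg (by simp), if_neg (by simp), zero_add]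
    rw [Finset.sum_eq_single k]
    · simp [hjk]
    · intro i _ hne
      refine if_neg fun h => ?_
      simp only [nb_apply, decide_eq_false_iff_not, not_not, decide_eq_true_eq] at h
      exact hne h.2.symm
    · intro h; exact absurd (Finset.mem_univ k) h
  · -- TT
    rw [if_neg (by simp), if_pos rfl, zero_add]
    rw [show (∑ i : Fin m, if nb i j = true ∧ nb i k = true then (1:ℤ) else 0)
        = ∑ i : Fin m, if j ≠ i ∧ k ≠ i then (1:ℤ) else 0 from
      Finset.sum_congr rfl fun i _ => by simp]
    rw [sum_ite_one, card_ne_pair' hm hjk, cast_sub_two hm]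

/-- Marginals of the `u⁻`-type table. -/
private lemma marg_uminus (hm : 3 ≤ m) (w : (Fin m → Bool) → ℤ)
    (hw : ∀ I, w I = if I = (fun _ => true) then (m:ℤ) - 2 else if ∃ i, I = eb i then 1 else 0)
    {j k : Fin m} (hjk : j ≠ k) (a b : Bool) :
    (∑ I : Fin m → Bool, if I j = a ∧ I k = b then w I else 0)
      = if a = b then (m:ℤ) - 2 else 1 := by
  have hz : ∀ i : Fin m, (fun _ => true : Fin m → Bool) ≠ eb i := by
    intro i h
    obtain ⟨q, hq, -⟩ := exists_not_mem_pair hm i i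
    have h2 := congrFun h q
    simp [hq] at h2
  simp only [hw]
  rw [sum_marg ((m:ℤ) - 2) (fun _ => true) eb eb_inj hz (fun I => I j = a ∧ I k = b)]
  cases a <;> cases b
  · -- FF
    rw [if_neg (by simp), if_pos rfl, zero_add]
    rw [show (∑ i : Fin m, if eb i j = false ∧ eb i k = false then (1:ℤ) else 0)
        = ∑ i : Fin m, if j ≠ i ∧ k ≠ i then (1:ℤ) else 0 from
      Finset.sum_congr rfl fun i _ => by simp]
    rw [sum_ite_one, card_ne_pair' hm hjk, cast_sub_two hm]
  · -- FT
    rw [if_neg (by simp), if_neg (by simp), zero_add]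
    rw [Finset.sum_eq_single k]
    · simp [hjk]
    · intro i _ hne
      refine if_neg fun h => ?_
      simp only [eb_apply, decide_eq_true_eq] at h
      exact hne h.2.symm
    · intro h; exact absurd (Finset.mem_univ k) h
  · -- TF
    rw [if_neg (by simp), if_neg (by simp), zero_add]
    rw [Finset.sum_eq_single j]
    · simp [hjk.symm]
    · intro i _ hne
      refine if_neg fun h => ?_
      simp only [eb_apply, decide_eq_true_eq] at h
      exact hne h.1.symm
    · intro h; exact absurd (Finset.mem_univ j) h
  · -- TT
    rw [if_pos ⟨rfl, rfl⟩, if_pos rfl]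
    have h1 : (∑ i : Fin m, if eb i j = true ∧ eb i k = true then (1:ℤ) else 0) = 0 :=
      Finset.sum_eq_zero fun i _ => by
        refine if_neg fun h => ?_
        simp only [eb_apply, decide_eq_true_eq] at h
        exact hjk (h.1.trans h.2.symm)
    rw [h1, add_zero]


section Tables

variable (v : (Fin m → Bool) → ℤ) (hv : ∀ I, 0 ≤ v I)
include hv

private lemma sum_subset_le (P : (Fin m → Bool) → Prop) [DecidablePred P] {c : ℤ}
    (h : (∑ I : Fin m → Bool, if P I then v I else 0) = c)
    (s : Finset (Fin m → Bool)) (hs : ∀ I ∈ s, P I) :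
    (∑ I ∈ s, v I) ≤ c := by
  rw [← Finset.sum_filter] at h
  rw [← h]
  exact Finset.sum_le_sum_of_subset_of_nonneg
    (fun I hI => Finset.mem_filter.mpr ⟨Finset.mem_univ I, hs I hI⟩)
    (fun I _ _ => hv I)

private lemma two_le (P : (Fin m → Bool) → Prop) [DecidablePred P] {c : ℤ}
    (h : (∑ I : Fin m → Bool, if P I then v I else 0) = c)
    {I₀ I₁ : Fin m → Bool} (hne : I₀ ≠ I₁) (h0 : P I₀) (h1 : P I₁) :
    v I₀ + v I₁ ≤ c := by
  have := sum_subset_le v hv P h {I₀, I₁} (by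
    intro I hI
    rcases Finset.mem_insert.mp hI with rfl | hI
    · exact h0
    · rw [Finset.mem_singleton.mp hI]; exact h1)
  rwa [Finset.sum_pair hne] at this

private lemma exists_pos (P : (Fin m → Bool) → Prop) [DecidablePred P] {c : ℤ}
    (h : (∑ I : Fin m → Bool, if P I then v I else 0) = c) (hc : 0 < c) :
    ∃ I, P I ∧ 0 < v I := by
  by_contra hcon
  push_neg at hcon
  have hle : (∑ I : Fin m → Bool, if P I then v I else 0) ≤ 0 :=
    Finset.sum_nonpos fun I _ => by
      split_ifs with hP
      · exact hcon I hP
      · exact le_rfl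
  rw [h] at hle
  exact absurd hc (not_lt.mpr hle)

private lemma sum_eq_single_of (P : (Fin m → Bool) → Prop) [DecidablePred P] {c : ℤ}
    (h : (∑ I : Fin m → Bool, if P I then v I else 0) = c)
    {I₀ : Fin m → Bool} (hI₀ : P I₀) (hothers : ∀ I, P I → I ≠ I₀ → v I = 0) :
    v I₀ = c := by
  rw [← h, ← Finset.sum_filter]
  exact (Finset.sum_eq_single I₀
    (fun I hI hne => hothers I (Finset.mem_filter.mp hI).2 hne)
    (fun h' => absurd (Finset.mem_filter.mpr ⟨Finset.mem_univ _, hI₀⟩) h')).symm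

variable (hS : ∀ j k : Fin m, j ≠ k → ∀ a b : Bool,
    (∑ I : Fin m → Bool, if I j = a ∧ I k = b then v I else 0) = if a = b then (m:ℤ) - 2 else 1)
include hS

/-- For any ordered pair, there is a table entry separating it. -/
private lemma exW {p q : Fin m} (hpq : p ≠ q) :
    ∃ W : Fin m → Bool, (W p = true ∧ W q = false) ∧ 0 < v W := by
  have h1 := hS p q hpq true false
  rw [if_neg (by simp)] at h1
  exact exists_pos v hv (fun I => I p = true ∧ I q = false) h1 one_pos

/-- Dichotomy: two distinct positive entries are "disjoint" or "co-covering". -/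
private lemma dicho {A B : Fin m → Bool} (hA : 0 < v A) (hB : 0 < v B) (hAB : A ≠ B) :
    (∀ p, ¬(A p = true ∧ B p = true)) ∨ (∀ q, A q = true ∨ B q = true) := by
  by_contra hcon
  push_neg at hcon
  obtain ⟨⟨p, hp1, hp2⟩, q, hq⟩ := hcon
  have hq1 : A q = false := by
    rcases hq with ⟨h1, h2⟩
    exact Bool.not_eq_true _ |>.mp h1
  have hq2 : B q = false := by
    rcases hq with ⟨h1, h2⟩
    exact Bool.not_eq_true _ |>.mp h2
  have hpq : p ≠ q := fun h => by rw [h, hq1] at hp1; exact Bool.false_ne_true hp1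
  have h1 := hS p q hpq true false
  rw [if_neg (by simp)] at h1
  have h2 := two_le v hv _ h1 hAB ⟨hp1, hq1⟩ ⟨hp2, hq2⟩
  have h3 : (1:ℤ) ≤ v A := hA
  have h4 : (1:ℤ) ≤ v B := hB
  linarith

/-- Classification: a positive, non-constant entry is a singleton or cosingleton string. -/
private lemma keyCl {I : Fin m → Bool} (hI : 0 < v I)
    (hz : I ≠ fun _ => false) (ho : I ≠ fun _ => true) :
    (∃ i, I = eb i) ∨ (∃ i, I = nb i) := by
  have hex_t : ∃ j, I j = true := by
    by_contra h
    push_neg at h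
    exact hz (funext fun j => Bool.not_eq_true _ |>.mp (h j))
  have hex_f : ∃ k, I k = false := by
    by_contra h
    push_neg at h
    refine ho (funext fun k => ?_)
    cases hIk : I k
    · exact absurd hIk (h k)
    · rfl
  obtain ⟨j, hj⟩ := hex_t
  obtain ⟨k, hk⟩ := hex_f
  by_cases hsingle : ∀ p, I p = true → p = j
  · left
    refine ⟨j, funext fun q => ?_⟩
    by_cases hqj : q = j
    · subst hqj; simp [hj]
    · simp only [eb_apply, decide_eq_false hqj]
      cases hIq : I q
      · rfl
      · exact absurd (hsingle q hIq) hqj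
  by_cases hcosingle : ∀ q, I q = false → q = k
  · right
    refine ⟨k, funext fun q => ?_⟩
    by_cases hqk : q = k
    · subst hqk; simp [hk]
    · simp only [nb_apply, decide_eq_true (show q ≠ k from hqk)]
      cases hIq : I q
      · exact absurd (hcosingle q hIq) hqk
      · rfl
  exfalso
  push_neg at hsingle hcosingle
  obtain ⟨j', hj't, hj'ne⟩ := hsingle
  obtain ⟨k', hk'f, hk'ne⟩ := hcosingle
  -- W separates (k, k')
  obtain ⟨W, ⟨hWk, hWk'⟩, hWpos⟩ := exW v hv hS (show k ≠ k' from fun h => hk'ne (h.symm))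
  have hWI : W ≠ I := fun h => by rw [h, hk] at hWk; exact Bool.false_ne_true hWk
  have hdisj : ∀ p, ¬(W p = true ∧ I p = true) := by
    rcases dicho v hv hS hWpos hI hWI with h | h
    · exact h
    · exact absurd (h k') (by simp [hWk', hk'f])
  have hWj : W j = false := by
    have := hdisj j
    simp only [hj, and_true] at this
    exact Bool.not_eq_true _ |>.mp this
  have hWj' : W j' = false := by
    have := hdisj j'
    simp only [hj't, and_true] at this
    exact Bool.not_eq_true _ |>.mp this
  -- U separates (j, j')
  obtain ⟨U, ⟨hUj, hUj'⟩, hUpos⟩ := exW v hv hS (show j ≠ j' from fun h => hj'ne (h.symm))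
  have hUI : U ≠ I := fun h => by rw [h, hj't] at hUj'; simp at hUj'
  have hunion : ∀ q, U q = true ∨ I q = true := by
    rcases dicho v hv hS hUpos hI hUI with h | h
    · exact absurd (h j) (by simp [hUj, hj])
    · exact h
  have hUk : U k = true := (hunion k).resolve_right (by simp [hk])
  have hUW : U ≠ W := fun h => by rw [h, hWj] at hUj; exact Bool.false_ne_true hUj
  rcases dicho v hv hS hUpos hWpos hUW with h | h
  · exact h k ⟨hUk, hWk⟩
  · rcases h j' with h' | h'
    · rw [hUj'] at h'; exact Bool.false_ne_true h'
    · rw [hWj'] at h'; exact Bool.false_ne_true h'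

/-- Mixing lemma: a positive singleton and positive cosingleton must share the index. -/
private lemma mixCl {i i' : Fin m} (hm : 3 ≤ m)
    (h1 : 0 < v (eb i)) (h2 : 0 < v (nb i')) : i = i' := by
  by_contra hne
  have hEN : eb i ≠ nb i' := by
    intro h
    obtain ⟨q, hqi, hqi'⟩ := exists_not_mem_pair hm i i'
    have := congrFun h q
    simp [hqi, hqi'] at this
  rcases dicho v hv hS h1 h2 hEN with h | h
  · exact h i ⟨by simp, by simp [hne]⟩
  · rcases h i' with h' | h'
    · simp only [eb_apply, decide_eq_true_eq] at h'
      exact hne h'.symm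
    · simp at h'


private lemma case_no_nb (hm : 3 ≤ m) (hB : ∀ i, v (nb i) = 0) :
    v = fun I => if I = (fun _ => true) then (m:ℤ) - 2 else if ∃ i, I = eb i then 1 else 0 := by
  have hvzero : ∀ I : Fin m → Bool, I ≠ (fun _ => false) → I ≠ (fun _ => true) →
      (∀ i, I ≠ eb i) → v I = 0 := by
    intro I h1 h2 h3
    by_contra h
    have hpos : 0 < v I := lt_of_le_of_ne (hv I) (Ne.symm h)
    rcases keyCl v hv hS hpos h1 h2 with ⟨i, hI⟩ | ⟨i, hI⟩
    · exact h3 i hI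
    · rw [hI] at h; exact h (hB i)
  have hE : ∀ p : Fin m, v (eb p) = 1 := by
    intro p
    obtain ⟨q, hq, -⟩ := exists_not_mem_pair hm p p
    have h1 := hS p q (fun h => hq h.symm) true false
    rw [if_neg (by simp)] at h1
    refine sum_eq_single_of v hv (fun I => I p = true ∧ I q = false) h1 (I₀ := eb p)
      ⟨by simp, by simp [hq]⟩ ?_
    rintro I ⟨hIp, hIq⟩ hne
    refine hvzero I ?_ ?_ ?_
    · intro h; rw [h] at hIp; simp at hIp
    · intro h; rw [h] at hIq; simp at hIq
    · intro i h
      rw [h] at hIp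
      simp only [eb_apply, decide_eq_true_eq] at hIp
      subst hIp
      exact hne h
  have h0m : 0 < m := by omega
  have h1m : 1 < m := by omega
  have hjk : (⟨0, h0m⟩ : Fin m) ≠ ⟨1, h1m⟩ := by simp [Fin.ext_iff]
  have hO : v (fun _ => true : Fin m → Bool) = (m:ℤ) - 2 := by
    have h1 := hS _ _ hjk true true
    rw [if_pos rfl] at h1
    refine sum_eq_single_of v hv _ h1 (I₀ := fun _ => true) ⟨rfl, rfl⟩ ?_
    rintro I ⟨hIj, hIk⟩ hne
    refine hvzero I (fun h => by rw [h] at hIj; simp at hIj) hne ?_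
    intro i h
    rw [h] at hIj hIk
    simp only [eb_apply, decide_eq_true_eq] at hIj hIk
    exact hjk (hIj.trans hIk.symm)
  have hZ : v (fun _ => false : Fin m → Bool) = 0 := by
    have h1 := hS _ _ hjk false false
    rw [if_pos rfl] at h1
    set s : Finset (Fin m → Bool) := insert (fun _ => false)
      ((Finset.univ.filter fun p : Fin m => p ≠ ⟨0, h0m⟩ ∧ p ≠ ⟨1, h1m⟩).image eb) with hs
    have hmem : ∀ I ∈ s, I (⟨0, h0m⟩ : Fin m) = false ∧ I (⟨1, h1m⟩ : Fin m) = false := by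
      intro I hI
      rcases Finset.mem_insert.mp hI with rfl | hI
      · exact ⟨rfl, rfl⟩
      · obtain ⟨p, hp, rfl⟩ := Finset.mem_image.mp hI
        simp only [Finset.mem_filter, Finset.mem_univ, true_and] at hp
        constructor
        · simp only [eb_apply]; exact decide_eq_false fun h => hp.1 h.symm
        · simp only [eb_apply]; exact decide_eq_false fun h => hp.2 h.symm
    have hnotmem : (fun _ => false : Fin m → Bool) ∉
        ((Finset.univ.filter fun p : Fin m => p ≠ ⟨0, h0m⟩ ∧ p ≠ ⟨1, h1m⟩).image eb) := by
      intro h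
      obtain ⟨p, -, hp⟩ := Finset.mem_image.mp h
      have := congrFun hp p
      simp at this
    have hsub := sum_subset_le v hv _ h1 s hmem
    rw [hs, Finset.sum_insert hnotmem,
      Finset.sum_image (fun a _ b _ h => eb_inj h)] at hsub
    have hsum : (∑ p ∈ Finset.univ.filter fun p : Fin m => p ≠ ⟨0, h0m⟩ ∧ p ≠ ⟨1, h1m⟩, v (eb p))
        = (m:ℤ) - 2 := by
      rw [Finset.sum_congr rfl fun p _ => hE p, Finset.sum_const, card_ne_pair hm hjk,
        nsmul_eq_mul, mul_one, cast_sub_two hm]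
    rw [hsum] at hsub
    have := hv (fun _ => false : Fin m → Bool)
    linarith
  funext I
  by_cases h1 : I = fun _ => true
  · rw [if_pos h1, h1]; exact hO
  · rw [if_neg h1]
    by_cases h2 : ∃ i, I = eb i
    · rw [if_pos h2]; obtain ⟨i, rfl⟩ := h2; exact hE i
    · rw [if_neg h2]
      by_cases h3 : I = fun _ => false
      · rw [h3]; exact hZ
      · exact hvzero I h3 h1 fun i h => h2 ⟨i, h⟩

private lemma case_no_eb (hm : 3 ≤ m) (hA : ∀ i, v (eb i) = 0) :
    v = fun I => if I = (fun _ => false) then (m:ℤ) - 2 else if ∃ i, I = nb i then 1 else 0 := by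
  have hvzero : ∀ I : Fin m → Bool, I ≠ (fun _ => false) → I ≠ (fun _ => true) →
      (∀ i, I ≠ nb i) → v I = 0 := by
    intro I h1 h2 h3
    by_contra h
    have hpos : 0 < v I := lt_of_le_of_ne (hv I) (Ne.symm h)
    rcases keyCl v hv hS hpos h1 h2 with ⟨i, hI⟩ | ⟨i, hI⟩
    · rw [hI] at h; exact h (hA i)
    · exact h3 i hI
  have hN : ∀ p : Fin m, v (nb p) = 1 := by
    intro p
    obtain ⟨q, hq, -⟩ := exists_not_mem_pair hm p p
    have h1 := hS q p hq true false
    rw [if_neg (by simp)] at h1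
    refine sum_eq_single_of v hv (fun I => I q = true ∧ I p = false) h1 (I₀ := nb p)
      ⟨by simp [hq], by simp⟩ ?_
    rintro I ⟨hIq, hIp⟩ hne
    refine hvzero I ?_ ?_ ?_
    · intro h; rw [h] at hIq; simp at hIq
    · intro h; rw [h] at hIp; simp at hIp
    · intro i h
      rw [h] at hIp
      simp only [nb_apply, decide_eq_false_iff_not, not_not] at hIp
      subst hIp
      exact hne h
  have h0m : 0 < m := by omega
  have h1m : 1 < m := by omega
  have hjk : (⟨0, h0m⟩ : Fin m) ≠ ⟨1, h1m⟩ := by simp [Fin.ext_iff]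
  have hZ : v (fun _ => false : Fin m → Bool) = (m:ℤ) - 2 := by
    have h1 := hS _ _ hjk false false
    rw [if_pos rfl] at h1
    refine sum_eq_single_of v hv _ h1 (I₀ := fun _ => false) ⟨rfl, rfl⟩ ?_
    rintro I ⟨hIj, hIk⟩ hne
    refine hvzero I hne (fun h => by rw [h] at hIj; simp at hIj) ?_
    intro i h
    rw [h] at hIj hIk
    simp only [nb_apply, decide_eq_false_iff_not, not_not] at hIj hIk
    exact hjk (hIj.trans hIk.symm)
  have hO : v (fun _ => true : Fin m → Bool) = 0 := by
    have h1 := hS _ _ hjk true true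
    rw [if_pos rfl] at h1
    set s : Finset (Fin m → Bool) := insert (fun _ => true)
      ((Finset.univ.filter fun p : Fin m => p ≠ ⟨0, h0m⟩ ∧ p ≠ ⟨1, h1m⟩).image nb) with hs
    have hmem : ∀ I ∈ s, I (⟨0, h0m⟩ : Fin m) = true ∧ I (⟨1, h1m⟩ : Fin m) = true := by
      intro I hI
      rcases Finset.mem_insert.mp hI with rfl | hI
      · exact ⟨rfl, rfl⟩
      · obtain ⟨p, hp, rfl⟩ := Finset.mem_image.mp hI
        simp only [Finset.mem_filter, Finset.mem_univ, true_and] at hp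
        constructor
        · simp only [nb_apply]; exact decide_eq_true fun h => hp.1 h.symm
        · simp only [nb_apply]; exact decide_eq_true fun h => hp.2 h.symm
    have hnotmem : (fun _ => true : Fin m → Bool) ∉
        ((Finset.univ.filter fun p : Fin m => p ≠ ⟨0, h0m⟩ ∧ p ≠ ⟨1, h1m⟩).image nb) := by
      intro h
      obtain ⟨p, -, hp⟩ := Finset.mem_image.mp h
      have := congrFun hp p
      simp at this
    have hsub := sum_subset_le v hv _ h1 s hmem
    rw [hs, Finset.sum_insert hnotmem,
      Finset.sum_image (fun a _ b _ h => nb_inj h)] at hsub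
    have hsum : (∑ p ∈ Finset.univ.filter fun p : Fin m => p ≠ ⟨0, h0m⟩ ∧ p ≠ ⟨1, h1m⟩, v (nb p))
        = (m:ℤ) - 2 := by
      rw [Finset.sum_congr rfl fun p _ => hN p, Finset.sum_const, card_ne_pair hm hjk,
        nsmul_eq_mul, mul_one, cast_sub_two hm]
    rw [hsum] at hsub
    have := hv (fun _ => true : Fin m → Bool)
    linarith
  funext I
  by_cases h1 : I = fun _ => false
  · rw [if_pos h1, h1]; exact hZ
  · rw [if_neg h1]
    by_cases h2 : ∃ i, I = nb i
    · rw [if_pos h2]; obtain ⟨i, rfl⟩ := h2; exact hN i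
    · rw [if_neg h2]
      by_cases h3 : I = fun _ => true
      · rw [h3]; exact hO
      · exact hvzero I h1 h3 fun i h => h2 ⟨i, h⟩

private lemma unique_tables (hm : 3 ≤ m) :
    v = (fun I => if I = (fun _ => false) then (m:ℤ) - 2 else if ∃ i, I = nb i then 1 else 0)
    ∨ v = (fun I => if I = (fun _ => true) then (m:ℤ) - 2 else if ∃ i, I = eb i then 1 else 0) := by
  by_cases hB : ∀ i, v (nb i) = 0
  · right; exact case_no_nb v hv hS hm hB
  · push_neg at hB
    obtain ⟨i₀, hi₀⟩ := hB
    have hnbpos : 0 < v (nb i₀) := lt_of_le_of_ne (hv _) (Ne.symm hi₀)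
    have hA : ∀ i, v (eb i) = 0 := by
      intro i
      by_contra h
      have hpos : 0 < v (eb i) := lt_of_le_of_ne (hv _) (Ne.symm h)
      have hii₀ : i = i₀ := mixCl v hv hS hm hpos hnbpos
      obtain ⟨j, k, hji, hki, hjk⟩ := exists_two_ne hm i
      obtain ⟨W, ⟨hWj, hWk⟩, hWpos⟩ := exW v hv hS hjk
      have hWz : W ≠ fun _ => false := fun h => by rw [h] at hWj; simp at hWj
      have hWo : W ≠ fun _ => true := fun h => by rw [h] at hWk; simp at hWk
      rcases keyCl v hv hS hWpos hWz hWo with ⟨p, hp⟩ | ⟨p, hp⟩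
      · rw [hp] at hWj
        simp only [eb_apply, decide_eq_true_eq] at hWj
        subst hWj
        rw [hp] at hWpos
        exact hji ((mixCl v hv hS hm hWpos hnbpos).trans hii₀.symm)
      · rw [hp] at hWk
        simp only [nb_apply, decide_eq_false_iff_not, not_not] at hWk
        subst hWk
        rw [hp] at hWpos
        exact hki (mixCl v hv hS hm hpos hWpos).symm
    left; exact case_no_eb v hv hS hm hA

end Tables


end Helpers

/-- for `m ≥ 3`, the table `u⁺` supported on the all-zeros string (with value
`m - 2`) and the strings `𝟏 - eᵢ` (with value `1`), and the table `u⁻` supported on the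
all-ones string (with value `m - 2`) and the strings `eᵢ` (with value `1`), have the same
`K_m`-marginals, and they are the only two nonnegative integer tables with these marginals. -/
theorem completeGraph_unique_tables (m : ℕ) (hm : 3 ≤ m)
    (uplus uminus : (Fin m → Bool) → ℤ)
    (huplus : uplus = fun I : Fin m → Bool =>
      if I = fun _ => false then (m : ℤ) - 2
      else if ∃ i : Fin m, I = fun j => decide (j ≠ i) then 1 else 0)
    (huminus : uminus = fun I : Fin m → Bool =>
      if I = fun _ => true then (m : ℤ) - 2
      else if ∃ i : Fin m, I = fun j => decide (j = i) then 1 else 0) :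
    MarginalsEq (⊤ : SimpleGraph (Fin m)) uplus uminus ∧
    ∀ v : (Fin m → Bool) → ℤ, (∀ I, 0 ≤ v I) →
      MarginalsEq (⊤ : SimpleGraph (Fin m)) v uplus → v = uplus ∨ v = uminus := by
  subst huplus huminus
  constructor
  · constructor
    · intro j k hadj a b
      have hjk : j ≠ k := (SimpleGraph.top_adj _ _).mp hadj
      exact (marg_uplus hm _ (fun _ => rfl) hjk a b).trans
        (marg_uminus hm _ (fun _ => rfl) hjk a b).symm
    · intro l hl a
      exfalso
      obtain ⟨q, hq, -⟩ := exists_not_mem_pair hm l l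
      exact hl q ((SimpleGraph.top_adj _ _).mpr (Ne.symm hq))
  · intro v hv hmarg
    have hS : ∀ j k : Fin m, j ≠ k → ∀ a b : Bool,
        (∑ I : Fin m → Bool, if I j = a ∧ I k = b then v I else 0)
          = if a = b then (m:ℤ) - 2 else 1 := by
      intro j k hjk a b
      rw [hmarg.1 j k ((SimpleGraph.top_adj _ _).mpr hjk) a b]
      exact marg_uplus hm _ (fun _ => rfl) hjk a b
    exact unique_tables v hv hS hm


end BinaryGraphModels
end

section
/- Let K_{2,n} (n ≥ 1) be the complete bipartite graph with partite sets {v₁,v₂} and {w₁,…,w_n}. For a nonnegative integer table M : {0,1}^V → ℕ and for i, j, k ∈ {0,1} and l ∈ {1,…,n}, set b_{ij,k,l}(M) = Σ_{I : I(v₁)=i, I(v₂)=j, I(w_l)=k} M(I). If M and N are nonnegative integer tables with b_{ij,k,l}(M) = b_{ij,k,l}(N) for all i, j, k ∈ {0,1} and all l ∈ {1,…,n}, then the binomial p^M − p^N (where p^M = ∏_I p_I^{M(I)}) lies in the ideal of R_{K_{2,n}} generated by the elements of I_{K_{2,n}} of total degree 2. -/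
open MvPolynomial Finset

/-!
Exchanging the value at a vertex `w` between two index strings that agree on all neighbours of
`w` leaves the image under `φ_G` unchanged, so such swaps give quadratic binomials in `I_G`. In
`K_{m,n}` the counts `b` are the masses of the cells of strings agreeing with a given `I` on the
left and at one right vertex `w_l`, and swaps at right vertices preserve them. If `M(I) > 0`,
every cell of `I` is occupied in `N`. Take `J` in the support of `N` in the left block of `I`;
while `J(w_l) ≠ I(w_l)`, swap `J` with an occupant of the cell of `I` at `l`, which lowers the
Hamming distance from `J` to `I`. Once `N` has been moved to a table containing `I`, cancel `p_I`
and induct on `M`.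
-/

namespace BinaryGraphModels

section Monomials

variable {σ R : Type*} [Fintype σ] [CommSemiring R]

noncomputable def monomialOf (M : σ → ℕ) : MvPolynomial σ R := ∏ i, X i ^ M i

lemma monomialOf_add (M N : σ → ℕ) :
    (monomialOf (M + N) : MvPolynomial σ R) = monomialOf M * monomialOf N := by
  simp only [monomialOf, Pi.add_apply, pow_add, prod_mul_distrib]

lemma monomialOf_single [DecidableEq σ] (i : σ) :
    (monomialOf (Pi.single i 1) : MvPolynomial σ R) = X i := by
  simp [monomialOf, Pi.single_apply, pow_ite]

end Monomials

lemma exists_eq_add_single {σ : Type*} [DecidableEq σ] {M : σ → ℕ} {i : σ} (h : M i ≠ 0) :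
    ∃ M' : σ → ℕ, M = M' + Pi.single i 1 :=
  ⟨M - Pi.single i 1, by ext j; rcases eq_or_ne j i with rfl | hj <;> simp [*]; omega⟩

lemma hammingDist_update_lt {ι γ : Type*} [Fintype ι] [DecidableEq ι] [DecidableEq γ]
    {x y : ι → γ} {i : ι} (h : x i ≠ y i) :
    hammingDist (Function.update x i (y i)) y < hammingDist x y := by
  refine card_lt_card ((ssubset_iff_of_subset fun j => ?_).2 ⟨i, by simpa using h, by simp⟩)
  rcases eq_or_ne j i with rfl | hj <;> simp [*]

noncomputable def spanOfDegree {σ R : Type*} [CommSemiring R] (I : Ideal (MvPolynomial σ R))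
    (d : ℕ) : Ideal (MvPolynomial σ R) :=
  Ideal.span {f | f ∈ I ∧ f.totalDegree = d}

lemma mem_spanOfDegree_of_isHomogeneous {σ R : Type*} [CommSemiring R]
    {I : Ideal (MvPolynomial σ R)} {f : MvPolynomial σ R} {d : ℕ} (hf : f ∈ I)
    (hd : f.IsHomogeneous d) : f ∈ spanOfDegree I d := by
  rcases eq_or_ne f 0 with rfl | h0
  · exact zero_mem _
  · exact Ideal.subset_span ⟨hf, hd.totalDegree h0⟩

section Swap

variable {V : Type} [Fintype V]

lemma X_mul_X_eq_of_sym2_eq {σ R : Type*} [CommSemiring R] {a b c d : σ}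
    (h : s(a, b) = s(c, d)) : (X a * X b : MvPolynomial σ R) = X c * X d := by
  rcases Sym2.eq_iff.1 h with ⟨rfl, rfl⟩ | ⟨rfl, rfl⟩
  · rfl
  · exact mul_comm _ _

lemma phi_X_mul_X_eq (G : SimpleGraph V) {J K J' K' : V → Bool}
    (hedge : ∀ e ∈ G.edgeSet, s(e.map (fun v => (v, J v)), e.map (fun v => (v, K v))) =
      s(e.map (fun v => (v, J' v)), e.map (fun v => (v, K' v))))
    (hvert : ∀ v, s(J v, K v) = s(J' v, K' v)) :
    phi G (X J * X K) = phi G (X J' * X K') := by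
  simp only [phi, map_mul, aeval_X]
  rw [mul_mul_mul_comm, ← prod_mul_distrib, ← prod_mul_distrib,
    mul_mul_mul_comm, ← prod_mul_distrib, ← prod_mul_distrib]
  congr 1 <;> refine prod_congr rfl fun x hx => X_mul_X_eq_of_sym2_eq ?_
  · simpa using hedge x (by simpa using hx)
  · simpa using congrArg (Sym2.map fun b => (x, b)) (hvert x)

theorem swap_mem_toricIdeal [DecidableEq V] (G : SimpleGraph V) (w : V) (J K : V → Bool)
    (h : ∀ v, G.Adj w v → J v = K v) :
    X J * X K - X (Function.update J w (K w)) * X (Function.update K w (J w)) ∈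
      toricIdeal G := by
  set J' := Function.update J w (K w)
  set K' := Function.update K w (J w)
  have hnear : ∀ v, v = w ∨ G.Adj w v → J' v = K v ∧ K' v = J v := by
    rintro v (rfl | hv)
    · simp [J', K']
    · simp [J', K', (G.ne_of_adj hv).symm, h v hv]
  have hfar : ∀ v, v ≠ w → J' v = J v ∧ K' v = K v := fun v hv => by simp [J', K', hv]
  rw [toricIdeal, RingHom.mem_ker, map_sub, sub_eq_zero]
  refine phi_X_mul_X_eq G (fun e he => ?_) fun v => ?_
  · by_cases hw : w ∈ e
    · have hvs : ∀ v ∈ e, v = w ∨ G.Adj w v := fun v hv =>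
        or_iff_not_imp_left.2 fun hvw => by
          rwa [(Sym2.mem_and_mem_iff (Ne.symm hvw)).1 ⟨hw, hv⟩] at he
      have hJ' : e.map (fun v => (v, J' v)) = e.map (fun v => (v, K v)) :=
        Sym2.map_congr fun v hv => by rw [(hnear v (hvs v hv)).1]
      have hK' : e.map (fun v => (v, K' v)) = e.map (fun v => (v, J v)) :=
        Sym2.map_congr fun v hv => by rw [(hnear v (hvs v hv)).2]
      rw [hJ', hK', Sym2.eq_swap]
    · have hvs : ∀ v ∈ e, v ≠ w := fun v hv hvw => hw (hvw ▸ hv)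
      have hJ' : e.map (fun v => (v, J' v)) = e.map (fun v => (v, J v)) :=
        Sym2.map_congr fun v hv => by rw [(hfar v (hvs v hv)).1]
      have hK' : e.map (fun v => (v, K' v)) = e.map (fun v => (v, K v)) :=
        Sym2.map_congr fun v hv => by rw [(hfar v (hvs v hv)).2]
      rw [hJ', hK']
  · rcases eq_or_ne v w with rfl | hv
    · rw [(hnear v (.inl rfl)).1, (hnear v (.inl rfl)).2, Sym2.eq_swap]
    · rw [(hfar v hv).1, (hfar v hv).2]

end Swap

section CompleteBipartite

variable {α β : Type} [Fintype α] [Fintype β] [DecidableEq α] [DecidableEq β]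

local notation "Q" => spanOfDegree (toricIdeal (completeBipartiteGraph α β)) 2

def cell (I : α ⊕ β → Bool) (l : β) : Finset (α ⊕ β → Bool) :=
  {J | (∀ a, J (.inl a) = I (.inl a)) ∧ J (.inr l) = I (.inr l)}

/-- For `α = Fin 2`, `cellCount M I l` is the paper's `b_{ij,k,l}(M)` with `i, j, k` the values of
`I` at `v₁, v₂, w_l`. -/
def cellCount (M : (α ⊕ β → Bool) → ℕ) (I : α ⊕ β → Bool) (l : β) : ℕ := ∑ J ∈ cell I l, M J

lemma mem_cell {I J : α ⊕ β → Bool} {l : β} :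
    J ∈ cell I l ↔ (∀ a, J (.inl a) = I (.inl a)) ∧ J (.inr l) = I (.inr l) := by
  simp [cell]

lemma cellCount_add (M N : (α ⊕ β → Bool) → ℕ) :
    cellCount (M + N) = cellCount M + cellCount N := by
  ext I l
  simp [cellCount, sum_add_distrib]

lemma cellCount_single (J I : α ⊕ β → Bool) (l : β) :
    cellCount (Pi.single J 1) I l = if J ∈ cell I l then 1 else 0 :=
  sum_pi_single' J 1 _

lemma le_cellCount (M : (α ⊕ β → Bool) → ℕ) (I : α ⊕ β → Bool) (l : β) :
    M I ≤ cellCount M I l :=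
  single_le_sum (fun _ _ => Nat.zero_le _) (mem_cell.2 ⟨fun _ => rfl, rfl⟩)

variable {J K : α ⊕ β → Bool}

lemma cellCount_swap (hJK : ∀ a, J (.inl a) = K (.inl a)) (l : β) (P : (α ⊕ β → Bool) → ℕ) :
    cellCount (P + Pi.single J 1 + Pi.single K 1) =
      cellCount (P + Pi.single (Function.update J (.inr l) (K (.inr l))) 1 +
        Pi.single (Function.update K (.inr l) (J (.inr l))) 1) := by
  ext I m
  simp only [cellCount_add, Pi.add_apply, cellCount_single, add_assoc]
  congr 1
  rcases eq_or_ne m l with rfl | hm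
  · simp [mem_cell, hJK, add_comm]
  · simp [mem_cell, hm]

lemma monomialOf_swap_sub_mem (hJK : ∀ a, J (.inl a) = K (.inl a)) (l : β)
    (P : (α ⊕ β → Bool) → ℕ) :
    monomialOf (P + Pi.single J 1 + Pi.single K 1) -
      monomialOf (P + Pi.single (Function.update J (.inr l) (K (.inr l))) 1 +
        Pi.single (Function.update K (.inr l) (J (.inr l))) 1) ∈ Q := by
  simp only [monomialOf_add, monomialOf_single, mul_assoc, ← mul_sub]
  refine Ideal.mul_mem_left _ _ (mem_spanOfDegree_of_isHomogeneous ?_ ?_)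
  · refine swap_mem_toricIdeal _ _ _ _ fun v hv => ?_
    cases v with
    | inl a => exact hJK a
    | inr _ => simp at hv
  · exact ((isHomogeneous_X _ _).mul (isHomogeneous_X _ _)).sub
      ((isHomogeneous_X _ _).mul (isHomogeneous_X _ _))

theorem exists_sub_mem_of_cellCount_ne_zero (I J : α ⊕ β → Bool) (P : (α ⊕ β → Bool) → ℕ)
    (hJ : ∀ a, J (.inl a) = I (.inl a)) (hP : ∀ l, cellCount (P + Pi.single J 1) I l ≠ 0) :
    ∃ P' : (α ⊕ β → Bool) → ℕ,
      cellCount (P' + Pi.single I 1) = cellCount (P + Pi.single J 1) ∧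
      monomialOf (P + Pi.single J 1) - monomialOf (P' + Pi.single I 1) ∈ Q := by
  induction hd : hammingDist J I using Nat.strong_induction_on generalizing J P with
  | _ d ih =>
  by_cases hJI : J = I
  · subst hJI
    exact ⟨P, rfl, by rw [sub_self]; exact zero_mem _⟩
  obtain ⟨v, hv⟩ := Function.ne_iff.mp hJI
  obtain ⟨l, rfl⟩ : ∃ l, v = .inr l := by
    cases v with
    | inl a => exact absurd (hJ a) hv
    | inr l => exact ⟨l, rfl⟩
  have hPl : cellCount P I l ≠ 0 := by
    have hJl : J ∉ cell I l := fun h => hv (mem_cell.1 h).2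
    simpa [cellCount_add, cellCount_single, hJl] using hP l
  obtain ⟨K, hK, hPK⟩ := exists_ne_zero_of_sum_ne_zero hPl
  obtain ⟨hKI, hKl⟩ := mem_cell.1 hK
  obtain ⟨P₀, rfl⟩ := exists_eq_add_single hPK
  have hJK : ∀ a, J (.inl a) = K (.inl a) := fun a => (hJ a).trans (hKI a).symm
  have hcount := cellCount_swap hJK l P₀
  have hmem := monomialOf_swap_sub_mem hJK l P₀
  set J' := Function.update J (.inr l) (K (.inr l))
  set K' := Function.update K (.inr l) (J (.inr l))
  have hcloser : hammingDist J' I < d := by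
    simpa only [J', hKl, hd] using hammingDist_update_lt hv
  have hJ'I : ∀ a, J' (.inl a) = I (.inl a) := fun a => by simp [J', hJ]
  rw [add_right_comm] at hP ⊢
  rw [hcount, add_right_comm] at hP
  obtain ⟨P', hP'count, hP'mem⟩ := ih _ hcloser J' (P₀ + Pi.single K' 1) hJ'I hP rfl
  refine ⟨P', by rw [hP'count, add_right_comm, hcount], ?_⟩
  rw [← sub_add_sub_cancel _ (monomialOf (P₀ + Pi.single J' 1 + Pi.single K' 1))]
  exact add_mem hmem (by rwa [add_right_comm])

theorem monomialOf_sub_mem_of_cellCount_eq [Nonempty β] (M N : (α ⊕ β → Bool) → ℕ)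
    (h : cellCount M = cellCount N) : monomialOf M - monomialOf N ∈ Q := by
  induction M using WellFoundedLT.induction generalizing N with
  | _ M ih =>
  obtain ⟨l₀⟩ := ‹Nonempty β›
  by_cases hM : M = 0
  · subst hM
    obtain rfl : N = 0 := funext fun I => Nat.eq_zero_of_le_zero <|
      (le_cellCount N I l₀).trans_eq (by rw [← congr_fun₂ h I l₀]; simp [cellCount])
    rw [sub_self]
    exact zero_mem _
  obtain ⟨I, hI⟩ := Function.ne_iff.mp hM
  obtain ⟨M₀, rfl⟩ := exists_eq_add_single hI
  have hN : ∀ l, cellCount N I l ≠ 0 := fun l =>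
    (h ▸ (Nat.pos_of_ne_zero hI).trans_le (le_cellCount _ I l)).ne'
  obtain ⟨J, hJ, hNJ⟩ := exists_ne_zero_of_sum_ne_zero (hN l₀)
  obtain ⟨P, rfl⟩ := exists_eq_add_single hNJ
  obtain ⟨P', hcount, hmem⟩ := exists_sub_mem_of_cellCount_ne_zero I J P (mem_cell.1 hJ).1 hN
  have hM₀ : monomialOf M₀ - monomialOf P' ∈ Q := by
    refine ih M₀ (lt_add_of_pos_right _ ?_) P'
      (add_right_cancel (b := cellCount (Pi.single I 1)) ?_)
    · simpa [Pi.lt_def] using ⟨I, by simp⟩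
    · rw [← cellCount_add, ← cellCount_add, h, hcount]
  have hsplit : (monomialOf (M₀ + Pi.single I 1) - monomialOf (P + Pi.single J 1) :
        MvPolynomial (α ⊕ β → Bool) ℂ) =
      (monomialOf M₀ - monomialOf P') * X I -
        (monomialOf (P + Pi.single J 1) - monomialOf (P' + Pi.single I 1)) := by
    simp only [monomialOf_add, monomialOf_single]
    ring
  rw [hsplit]
  exact sub_mem (Ideal.mul_mem_right _ _ hM₀) hmem

lemma cellCount_eq_sum_ite {n : ℕ} (M : (Fin 2 ⊕ Fin n → Bool) → ℕ) (I : Fin 2 ⊕ Fin n → Bool)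
    (l : Fin n) :
    cellCount M I l = ∑ J : Fin 2 ⊕ Fin n → Bool,
      if J (.inl 0) = I (.inl 0) ∧ J (.inl 1) = I (.inl 1) ∧ J (.inr l) = I (.inr l)
        then M J else 0 := by
  simp only [cellCount, cell, sum_filter, Fin.forall_fin_two, and_assoc]

end CompleteBipartite

/-- in `K_{2,n}`, if two nonnegative tables `M`, `N` have the same counts
`b_{ij,k,l}` (number of entries with value `i` at `v₁`, `j` at `v₂` and `k` at `w_l`, summed
with multiplicity) for all `i, j, k` and all `l`, then the binomial `p^M - p^N` lies in the
ideal generated by the quadratic elements of `I_{K_{2,n}}`. -/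
theorem completeBipartite_two_quadratic_moves (n : ℕ) (hn : 1 ≤ n)
    (M N : ((Fin 2 ⊕ Fin n) → Bool) → ℕ)
    (hb : ∀ i j k : Bool, ∀ l : Fin n,
      (∑ I : (Fin 2 ⊕ Fin n) → Bool,
        if I (Sum.inl 0) = i ∧ I (Sum.inl 1) = j ∧ I (Sum.inr l) = k then M I else 0) =
      (∑ I : (Fin 2 ⊕ Fin n) → Bool,
        if I (Sum.inl 0) = i ∧ I (Sum.inl 1) = j ∧ I (Sum.inr l) = k then N I else 0)) :
    ((∏ I : (Fin 2 ⊕ Fin n) → Bool, X I ^ M I) -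
        (∏ I : (Fin 2 ⊕ Fin n) → Bool, X I ^ N I) :
        MvPolynomial ((Fin 2 ⊕ Fin n) → Bool) ℂ) ∈
      Ideal.span {f : MvPolynomial ((Fin 2 ⊕ Fin n) → Bool) ℂ |
        f ∈ toricIdeal (completeBipartiteGraph (Fin 2) (Fin n)) ∧ f.totalDegree = 2} := by
  have : Nonempty (Fin n) := ⟨⟨0, hn⟩⟩
  refine monomialOf_sub_mem_of_cellCount_eq M N (funext₂ fun I l => ?_)
  rw [cellCount_eq_sum_ite, cellCount_eq_sum_ite]
  exact hb _ _ _ l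

end BinaryGraphModels
end

section
/- Let P be the triangular prism: the graph on vertices v₁, v₂, v₃, w₁, w₂, w₃ with edges {v₁,v₂}, {v₂,v₃}, {v₁,v₃}, {w₁,w₂}, {w₂,w₃}, {w₁,w₃}, {v₁,w₁}, {v₂,w₂}, {v₃,w₃}. The proper 3-coloring C_A with C_A(v_i) = i and (C_A(w₁), C_A(w₂), C_A(w₃)) = (2,3,1) and the proper 3-coloring C_B with C_B(v_i) = i and (C_B(w₁), C_B(w₂), C_B(w₃)) = (3,1,2) lie in different connected components of the 3-coloring graph C₃(P); in particular C₃(P) is disconnected, i.e., the triangular prism is 3-rigid. -/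
namespace BinaryGraphModels

/-- `C` is a proper 3-coloring of `H` (colors in `Fin 3`). -/
def ProperColoring {V : Type} (H : SimpleGraph V) (C : V → Fin 3) : Prop :=
  ∀ u v : V, H.Adj u v → C u ≠ C v

/-- `C'` is obtained from `C` by picking a color `i`, picking a connected component `K` of the
induced subgraph of `H` on the vertices not colored `i`, and interchanging the two colors
different from `i` on all vertices of `K` while leaving all other vertices unchanged. -/
def ColoringMove {V : Type} (H : SimpleGraph V) (C C' : V → Fin 3) : Prop :=
  ∃ i : Fin 3, ∃ K : (H.induce {v : V | C v ≠ i}).ConnectedComponent,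
    (∀ v : {v : V | C v ≠ i},
      ((H.induce {v : V | C v ≠ i}).connectedComponentMk v = K →
        C' v.val ≠ C v.val ∧ C' v.val ≠ i) ∧
      ((H.induce {v : V | C v ≠ i}).connectedComponentMk v ≠ K → C' v.val = C v.val)) ∧
    ∀ v : V, C v = i → C' v = C v

/-- One step (edge) in the 3-coloring graph `C₃(H)`. -/
def ColoringStep {V : Type} (H : SimpleGraph V) (C C' : V → Fin 3) : Prop :=
  ProperColoring H C ∧ ProperColoring H C' ∧ (ColoringMove H C C' ∨ ColoringMove H C' C)

/-- The triangular prism: vertices `0,1,2` (the `vᵢ`) and `3,4,5` (the `wᵢ`), with two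
triangles and a perfect matching between them. -/
def triangularPrism : SimpleGraph (Fin 6) :=
  SimpleGraph.fromEdgeSet
    {s(0, 1), s(1, 2), s(0, 2), s(3, 4), s(4, 5), s(3, 5), s(0, 3), s(1, 4), s(2, 5)}

lemma adj01 : triangularPrism.Adj 0 1 := by simp [triangularPrism, SimpleGraph.fromEdgeSet_adj]
lemma adj03 : triangularPrism.Adj 0 3 := by simp [triangularPrism, SimpleGraph.fromEdgeSet_adj]
lemma adj02 : triangularPrism.Adj 0 2 := by simp [triangularPrism, SimpleGraph.fromEdgeSet_adj]
lemma adj12 : triangularPrism.Adj 1 2 := by simp [triangularPrism, SimpleGraph.fromEdgeSet_adj]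
lemma adj14 : triangularPrism.Adj 1 4 := by simp [triangularPrism, SimpleGraph.fromEdgeSet_adj]
lemma adj34 : triangularPrism.Adj 3 4 := by simp [triangularPrism, SimpleGraph.fromEdgeSet_adj]
lemma adj45 : triangularPrism.Adj 4 5 := by simp [triangularPrism, SimpleGraph.fromEdgeSet_adj]
lemma adj35 : triangularPrism.Adj 3 5 := by simp [triangularPrism, SimpleGraph.fromEdgeSet_adj]
lemma adj25 : triangularPrism.Adj 2 5 := by simp [triangularPrism, SimpleGraph.fromEdgeSet_adj]

lemma fin3_swap : ∀ (a b a' b' i : Fin 3), a ≠ i → b ≠ i → a' ≠ a → a' ≠ i → b' ≠ b → b' ≠ i →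
    (b = a ↔ b' = a') := by decide

/-- vertices 1 and 3 are in the same component of the induced graph on non-`i` vertices. -/
lemma same_comp (C : Fin 6 → Fin 3) (hC : ProperColoring triangularPrism C) (i : Fin 3)
    (h1 : C 1 ≠ i) (h3 : C 3 ≠ i) :
    (triangularPrism.induce {v | C v ≠ i}).connectedComponentMk ⟨1, h1⟩ =
      (triangularPrism.induce {v | C v ≠ i}).connectedComponentMk ⟨3, h3⟩ := by
  apply SimpleGraph.ConnectedComponent.sound
  by_cases h0 : C 0 = i
  · by_cases h4 : C 4 = i
    · have h2 : C 2 ≠ i := by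
        have := hC 2 0 adj02.symm; rw [h0] at this; exact this
      have h5 : C 5 ≠ i := by
        have := hC 5 4 adj45.symm; rw [h4] at this; exact this
      have e12 : (triangularPrism.induce {v | C v ≠ i}).Adj ⟨1, h1⟩ ⟨2, h2⟩ := adj12
      have e25 : (triangularPrism.induce {v | C v ≠ i}).Adj ⟨2, h2⟩ ⟨5, h5⟩ := adj25
      have e53 : (triangularPrism.induce {v | C v ≠ i}).Adj ⟨5, h5⟩ ⟨3, h3⟩ := adj35.symm
      exact (e12.reachable.trans e25.reachable).trans e53.reachable
    · have e14 : (triangularPrism.induce {v | C v ≠ i}).Adj ⟨1, h1⟩ ⟨4, h4⟩ := adj14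
      have e43 : (triangularPrism.induce {v | C v ≠ i}).Adj ⟨4, h4⟩ ⟨3, h3⟩ := adj34.symm
      exact e14.reachable.trans e43.reachable
  · have e10 : (triangularPrism.induce {v | C v ≠ i}).Adj ⟨1, h1⟩ ⟨0, h0⟩ := adj01.symm
    have e03 : (triangularPrism.induce {v | C v ≠ i}).Adj ⟨0, h0⟩ ⟨3, h3⟩ := adj03
    exact e10.reachable.trans e03.reachable

lemma move_inv {C C' : Fin 6 → Fin 3} (hC : ProperColoring triangularPrism C)
    (h : ColoringMove triangularPrism C C') : (C 3 = C 1 ↔ C' 3 = C' 1) := by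
  obtain ⟨i, K, hK, hfix⟩ := h
  by_cases h1 : C 1 = i
  · have e1 : C' 1 = C 1 := hfix 1 h1
    by_cases h3 : C 3 = i
    · have e3 : C' 3 = C 3 := hfix 3 h3
      rw [e1, e3]
    · have h3' : C' 3 ≠ i := by
        by_cases hk : (triangularPrism.induce {v | C v ≠ i}).connectedComponentMk ⟨3, h3⟩ = K
        · exact ((hK ⟨3, h3⟩).1 hk).2
        · rw [(hK ⟨3, h3⟩).2 hk]; exact h3
      constructor
      · intro he; exact absurd (he.trans h1) h3
      · intro he; exact absurd (he.trans (e1.trans h1)) h3'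
  · by_cases h3 : C 3 = i
    · have e3 : C' 3 = C 3 := hfix 3 h3
      have h1' : C' 1 ≠ i := by
        by_cases hk : (triangularPrism.induce {v | C v ≠ i}).connectedComponentMk ⟨1, h1⟩ = K
        · exact ((hK ⟨1, h1⟩).1 hk).2
        · rw [(hK ⟨1, h1⟩).2 hk]; exact h1
      constructor
      · intro he; exact absurd (he.symm.trans h3) h1
      · intro he; exact absurd (he.symm.trans (e3.trans h3)) h1'
    · have hsame := same_comp C hC i h1 h3
      by_cases hk : (triangularPrism.induce {v | C v ≠ i}).connectedComponentMk ⟨1, h1⟩ = K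
      · obtain ⟨a1, a2⟩ := (hK ⟨1, h1⟩).1 hk
        obtain ⟨b1, b2⟩ := (hK ⟨3, h3⟩).1 (hsame ▸ hk)
        exact fin3_swap (C 1) (C 3) (C' 1) (C' 3) i h1 h3 a1 a2 b1 b2
      · have e1 : C' 1 = C 1 := (hK ⟨1, h1⟩).2 hk
        have e3 : C' 3 = C 3 := (hK ⟨3, h3⟩).2 (hsame ▸ hk)
        rw [e1, e3]

lemma step_inv {C C' : Fin 6 → Fin 3} (h : ColoringStep triangularPrism C C') :
    (C 3 = C 1 ↔ C' 3 = C' 1) := by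
  obtain ⟨hC, hC', hm⟩ := h
  rcases hm with hm | hm
  · exact move_inv hC hm
  · exact (move_inv hC' hm).symm

/-- the two proper 3-colorings `(1,2,3;2,3,1)` and `(1,2,3;3,1,2)` of the
triangular prism (here with colors `0,1,2`) lie in different connected components of the
3-coloring graph `C₃(P)`; in particular the triangular prism is 3-rigid. -/
theorem triangularPrism_three_rigid :
    ProperColoring triangularPrism ![0, 1, 2, 1, 2, 0] ∧
    ProperColoring triangularPrism ![0, 1, 2, 2, 0, 1] ∧
    ¬ Relation.ReflTransGen (ColoringStep triangularPrism)
        ![0, 1, 2, 1, 2, 0] ![0, 1, 2, 2, 0, 1] := by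
  refine ⟨?_, ?_, ?_⟩
  · intro u v huv
    rw [triangularPrism, SimpleGraph.fromEdgeSet_adj] at huv
    simp only [Set.mem_insert_iff, Set.mem_singleton_iff] at huv
    obtain ⟨hm, hne⟩ := huv
    rcases hm with h|h|h|h|h|h|h|h|h <;>
      rcases Sym2.eq_iff.mp h with ⟨rfl, rfl⟩ | ⟨rfl, rfl⟩ <;> decide
  · intro u v huv
    rw [triangularPrism, SimpleGraph.fromEdgeSet_adj] at huv
    simp only [Set.mem_insert_iff, Set.mem_singleton_iff] at huv
    obtain ⟨hm, hne⟩ := huv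
    rcases hm with h|h|h|h|h|h|h|h|h <;>
      rcases Sym2.eq_iff.mp h with ⟨rfl, rfl⟩ | ⟨rfl, rfl⟩ <;> decide
  · intro hreach
    have key : ∀ D : Fin 6 → Fin 3,
        Relation.ReflTransGen (ColoringStep triangularPrism) ![0, 1, 2, 1, 2, 0] D →
        D 3 = D 1 := by
      intro D hD
      induction hD with
      | refl => decide
      | tail _ hstep ih => exact (step_inv hstep).mp ih
    have := key _ hreach
    simp [Matrix.cons_val_one, Matrix.head_cons] at this


end BinaryGraphModels
end

section
/- Fix an integer d ≥ 2. Let X_d be the fundamental graph whose vertices are the pairs (S,T) of subsets of {1,…,d} with |S| = |T| ≤ d/2 and such that 1 ∈ S whenever |S| = d/2, with distinct vertices (S₁,T₁) and (S₂,T₂) adjacent iff |S₁ ∩ S₂| = |T₁ ∩ T₂|. Define index strings I₁,…,I_d and J₁,…,J_d on the vertex set of X_d by I_j((S,T)) = 1 iff j ∈ S and J_j((S,T)) = 1 iff j ∈ T. Then the distinguished generator f_d = ∏_{j=1}^{d} p_{I_j} − ∏_{j=1}^{d} p_{J_j} lies in the toric ideal I_{X_d}. -/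
/-!
The image of `∏_j p_{I_j}` under `φ_G` contains, for an edge `{p, q}`, the variable
`t^{pq}_{ab}` once for each `j` with `(I_j(p), I_j(q)) = (a, b)`, and similarly at an isolated
vertex. So `∏_j p_{I_j} - ∏_j p_{J_j}` lies in `I_G` as soon as these counts agree for the two
families. For `X_d` and a vertex `(S, T)`, the counts are determined by `|S|`, and for an edge
`{(S₁, T₁), (S₂, T₂)}` by `|S₁|`, `|S₂|` and `|S₁ ∩ S₂|` by inclusion–exclusion; the defining
conditions `|S| = |T|` and `|S₁ ∩ S₂| = |T₁ ∩ T₂|` make them agree with the counts for the `T`'s.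
-/

open MvPolynomial Finset

namespace BinaryGraphModels

/-- Vertices of the fundamental graph `X_d`: pairs `(S, T)` of subsets of `{1, …, d}`
(here `Fin d`, with the distinguished element `1` rendered as `0 : Fin d`, i.e. the natural
number `0` among the values of `Fin.val`) with `|S| = |T| ≤ d/2`, and `1 ∈ S` if `|S| = d/2`. -/
abbrev FundamentalVertex (d : ℕ) : Type :=
  {p : Finset (Fin d) × Finset (Fin d) //
    p.1.card = p.2.card ∧ 2 * p.1.card ≤ d ∧
      (2 * p.1.card = d → 0 ∈ p.1.image Fin.val)}

/-- The fundamental graph `X_d`: distinct vertices `(S₁, T₁)` and `(S₂, T₂)` are adjacent iff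
`|S₁ ∩ S₂| = |T₁ ∩ T₂|`. -/
def fundamentalGraph (d : ℕ) : SimpleGraph (FundamentalVertex d) where
  Adj p q := p ≠ q ∧ (p.val.1 ∩ q.val.1).card = (p.val.2 ∩ q.val.2).card
  symm := ⟨by
    rintro p q ⟨hne, h⟩
    refine ⟨hne.symm, ?_⟩
    rw [Finset.inter_comm q.val.1, Finset.inter_comm q.val.2]
    exact h⟩
  loopless := ⟨fun p h => h.1 rfl⟩

section Counting

variable {α : Type*} [Fintype α]

theorem prod_comp_eq_of_card_fiber_eq {β M : Type*} [Fintype β] [DecidableEq β]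
    [CommMonoid M] {g₁ g₂ : α → β} (F : β → M)
    (h : ∀ b, #{a | g₁ a = b} = #{a | g₂ a = b}) :
    ∏ a, F (g₁ a) = ∏ a, F (g₂ a) := by
  have prod_eq_prod_pow_card_fiber (g : α → β) : ∏ a, F (g a) = ∏ b, F b ^ #{a | g a = b} := by
    rw [← prod_fiberwise' univ g F]
    exact prod_congr rfl fun b _ => prod_const _
  simp only [prod_eq_prod_pow_card_fiber, h]

variable [DecidableEq α]

theorem card_filter_decide_mem_eq {A C : Finset α} (h : #A = #C) (a : Bool) :
    #{j | decide (j ∈ A) = a} = #{j | decide (j ∈ C) = a} := by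
  cases a <;> simp [filter_not, card_univ_sdiff, h]

theorem card_filter_decide_mem_pair (A B : Finset α) (a b : Bool) :
    #{j | decide (j ∈ A) = a ∧ decide (j ∈ B) = b} =
      match a, b with
      | true, true => #(A ∩ B)
      | true, false => #A - #(A ∩ B)
      | false, true => #B - #(A ∩ B)
      | false, false => Fintype.card α - #(A ∪ B) := by
  cases a <;> cases b <;> dsimp only
  · rw [← card_compl]; congr 1; ext; simp
  · rw [← card_sdiff]; congr 1; ext; simp [and_comm]
  · rw [inter_comm, ← card_sdiff]; congr 1; ext; simp
  · congr 1; ext; simp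

theorem card_filter_decide_mem_pair_eq {A B C D : Finset α} (hA : #A = #C) (hB : #B = #D)
    (hAB : #(A ∩ B) = #(C ∩ D)) (a b : Bool) :
    #{j | decide (j ∈ A) = a ∧ decide (j ∈ B) = b} =
      #{j | decide (j ∈ C) = a ∧ decide (j ∈ D) = b} := by
  have hAuB : #(A ∪ B) = #(C ∪ D) := by
    rw [card_union, card_union, hA, hB, hAB]
  rw [card_filter_decide_mem_pair, card_filter_decide_mem_pair]
  cases a <;> cases b <;> simp only [hA, hB, hAB, hAuB]

end Counting

theorem prod_X_sub_prod_X_mem_toricIdeal {V : Type} {ι : Type*} [Fintype V] [DecidableEq V]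
    [Fintype ι] (G : SimpleGraph V) (I J : ι → V → Bool)
    (hedge : ∀ p q, G.Adj p q → ∀ a b,
      #{j | I j p = a ∧ I j q = b} = #{j | J j p = a ∧ J j q = b})
    (hisolated : ∀ l, (∀ k, ¬ G.Adj l k) → ∀ a, #{j | I j l = a} = #{j | J j l = a}) :
    (∏ j, X (I j)) - ∏ j, X (J j) ∈ toricIdeal G := by
  classical
  rw [toricIdeal, RingHom.mem_ker]
  simp only [AlgHom.toRingHom_eq_coe, RingHom.coe_coe, map_sub, map_prod, phi, aeval_X]
  rw [sub_eq_zero, prod_mul_distrib, prod_mul_distrib]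
  congr 1
  · refine prod_comm.trans (Eq.trans (prod_congr rfl fun e he => ?_) prod_comm)
    induction e using Sym2.inductionOn with
    | hf p q =>
      simp only [Sym2.map_mk]
      refine prod_comp_eq_of_card_fiber_eq (g₁ := fun j => (I j p, I j q))
        (g₂ := fun j => (J j p, J j q)) (fun y => X (Sum.inl s((p, y.1), (q, y.2)))) fun y => ?_
      simpa only [Prod.ext_iff] using hedge p q (G.mem_edgeFinset.mp he) y.1 y.2
  · refine prod_comm.trans (Eq.trans (prod_congr rfl fun l hl => ?_) prod_comm)
    exact prod_comp_eq_of_card_fiber_eq (g₁ := (I · l)) (g₂ := (J · l))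
      (fun a => X (Sum.inr (l, a))) (hisolated l (mem_filter.mp hl).2)

theorem distinguishedGenerator_mem_general (d : ℕ) :
    ((∏ j : Fin d, X (fun p : FundamentalVertex d => decide (j ∈ p.val.1))) -
        (∏ j : Fin d, X (fun p : FundamentalVertex d => decide (j ∈ p.val.2))) :
        MvPolynomial (FundamentalVertex d → Bool) ℂ) ∈
      toricIdeal (fundamentalGraph d) := by
  apply prod_X_sub_prod_X_mem_toricIdeal
  · exact fun p q hpq => card_filter_decide_mem_pair_eq p.prop.1 q.prop.1 hpq.2
  · exact fun l _ => card_filter_decide_mem_eq l.prop.1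

/-- the distinguished generator `f_d = ∏_j p_{I_j} - ∏_j p_{J_j}`, where
`I_j((S,T)) = 1` iff `j ∈ S` and `J_j((S,T)) = 1` iff `j ∈ T`, lies in the toric ideal of the
fundamental graph `X_d`. -/
theorem distinguishedGenerator_mem (d : ℕ) (hd : 2 ≤ d) :
    ((∏ j : Fin d, X (fun p : FundamentalVertex d => decide (j ∈ p.val.1))) -
        (∏ j : Fin d, X (fun p : FundamentalVertex d => decide (j ∈ p.val.2))) :
        MvPolynomial (FundamentalVertex d → Bool) ℂ) ∈
      toricIdeal (fundamentalGraph d) :=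
  distinguishedGenerator_mem_general d

end BinaryGraphModels
end

section
/- Let G be a finite simple graph with n vertices, edge set E(G) and set of isolated vertices Iso(G). For each index string I : V → {0,1} let a_I ∈ ℝ^{4|E(G)| + 2|Iso(G)|} be the 0/1 vector, with coordinates indexed by pairs (e, (α,β)) for e = {j,k} ∈ E(G) and (α,β) ∈ {0,1}² together with pairs (l, α) for l ∈ Iso(G) and α ∈ {0,1}, whose (e,(α,β)) coordinate is 1 iff (I(j), I(k)) = (α,β) and whose (l,α) coordinate is 1 iff I(l) = α. Then the affine span of the point set {a_I : I ∈ {0,1}^V} has dimension n + |E(G)|; that is, the polytope P_G = conv{a_I : I ∈ {0,1}^V} has dimension n + |E(G)|. -/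
/-!
Write `x(I) ∈ ℝ^(V ⊕ E(G))` for the vector of square-free monomials `x_v = I(v)` and
`x_e = I(j) I(k)` for `e = {j, k}`. Every coordinate of `a_I` depends on `I` through at most the
two values at the ends of an edge, so it is a multilinear polynomial in them, i.e. an affine
function of `x(I)`; conversely `x_e = a_I(e, (1,1))`, and `x_v` is `a_I(v, 1)` if `v` is isolated
and `a_I(vw, (1,1)) + a_I(vw, (1,0))` for any neighbour `w` otherwise. So the two point
configurations are affine images of each other and have the same affine dimension. Finally the
`x(I)` affinely span everything: `x(0) = 0`, `x(δ_v) = e_v` and `x(δ_j + δ_k) = e_j + e_k + e_{jk}`.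
-/

namespace BinaryGraphModels

/-- The column `a_I` of the matrix `A_G`: the 0/1 marginal point of the index string `I`, with
one coordinate for each edge together with an unordered assignment of values to its endpoints
(encoded as an element of `Sym2 (V × Bool)`), and one coordinate for each pair of a vertex and
a value (used for isolated vertices). The `(e, (α,β))` coordinate is 1 iff
`(I j, I k) = (α, β)` where `e = {j, k}`, and the `(l, α)` coordinate is 1 iff `l` is isolated
and `I l = α`. -/
noncomputable def marginalPoint {V : Type} [Fintype V] [DecidableEq V] (G : SimpleGraph V)
    (I : V → Bool) : (Sym2 (V × Bool) ⊕ (V × Bool)) → ℝ := by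
  classical
  exact fun c =>
    match c with
    | Sum.inl m => if ∃ e ∈ G.edgeSet, Sym2.map (fun v => (v, I v)) e = m then 1 else 0
    | Sum.inr (l, α) => if (∀ k, ¬ G.Adj l k) ∧ I l = α then 1 else 0

end BinaryGraphModels

open Set Module

section AffineFunctions

variable (k : Type*) {ι V P : Type*} [Field k] [AddCommGroup V] [Module k V] [AddTorsor V P]

def affineFunctionsOf (f : ι → P) : Submodule k (ι → k) where
  carrier := {h | ∃ A : P →ᵃ[k] k, A ∘ f = h}
  add_mem' := by
    rintro _ _ ⟨A, rfl⟩ ⟨B, rfl⟩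
    exact ⟨A + B, rfl⟩
  zero_mem' := ⟨0, rfl⟩
  smul_mem' := by
    rintro c _ ⟨A, rfl⟩
    exact ⟨c • A, rfl⟩

variable {k}

lemma const_mem_affineFunctionsOf (f : ι → P) (c : k) :
    (fun _ => c) ∈ affineFunctionsOf k f :=
  ⟨AffineMap.const k P c, rfl⟩

lemma apply_mem_affineFunctionsOf {C : Type*} (f : ι → C → k) (c : C) :
    (fun i => f i c) ∈ affineFunctionsOf k f :=
  ⟨(LinearMap.proj c).toAffineMap, rfl⟩

lemma finrank_direction_affineSpan_range_le [FiniteDimensional k V] {C : Type*}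
    (f : ι → P) (g : ι → C → k) (hg : ∀ c, (fun i => g i c) ∈ affineFunctionsOf k f) :
    finrank k (affineSpan k (range g)).direction ≤
      finrank k (affineSpan k (range f)).direction := by
  choose A hA using hg
  have hrange : range g = AffineMap.pi A '' range f := by
    rw [← range_comp]
    congr 1
    funext i c
    exact (congrFun (hA c) i).symm
  rw [hrange, ← AffineSubspace.map_span, AffineSubspace.map_direction]
  exact Submodule.finrank_map_le _ _

end AffineFunctions

namespace BinaryGraphModels

section

variable {V : Type} [Fintype V] [DecidableEq V] (G : SimpleGraph V)

open Classical in
lemma marginalPoint_inr (I : V → Bool) (l : V) (α : Bool) :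
    marginalPoint G I (Sum.inr (l, α)) = if (∀ k, ¬ G.Adj l k) ∧ I l = α then 1 else 0 :=
  rfl

open Classical in
lemma marginalPoint_inl_mk (I : V → Bool) (j k : V) (α β : Bool) :
    marginalPoint G I (Sum.inl s((j, α), (k, β))) =
      if G.Adj j k ∧ I j = α ∧ I k = β then 1 else 0 := by
  have hiff : (∃ e ∈ G.edgeSet, Sym2.map (fun v => (v, I v)) e = s((j, α), (k, β))) ↔
      G.Adj j k ∧ I j = α ∧ I k = β := by
    constructor
    · rintro ⟨e, he, hm⟩
      induction e using Sym2.ind with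
      | _ a b =>
        simp only [Sym2.map_mk, Sym2.eq_iff, Prod.mk.injEq] at hm
        rcases hm with ⟨⟨rfl, rfl⟩, rfl, rfl⟩ | ⟨⟨rfl, rfl⟩, rfl, rfl⟩
        · exact ⟨he, rfl, rfl⟩
        · exact ⟨he.symm, rfl, rfl⟩
    · rintro ⟨hadj, rfl, rfl⟩
      exact ⟨s(j, k), hadj, rfl⟩
  simp only [marginalPoint, hiff]

def monomialPoint (I : V → Bool) : V ⊕ G.edgeSet → ℝ
  | Sum.inl v => if I v then 1 else 0
  | Sum.inr e => if ∀ v ∈ (e : Sym2 V), I v then 1 else 0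

lemma monomialPoint_inr_mk (I : V → Bool) {j k : V} (h : s(j, k) ∈ G.edgeSet) :
    monomialPoint G I (Sum.inr ⟨s(j, k), h⟩) = if I j ∧ I k then 1 else 0 := by
  simp [monomialPoint]

lemma monomialPoint_false : monomialPoint G (fun _ => false) = 0 := by
  funext t
  rcases t with v | ⟨e, he⟩
  · rfl
  · induction e using Sym2.ind with
    | _ j k => exact monomialPoint_inr_mk G _ he

lemma monomialPoint_single (v : V) :
    monomialPoint G (fun u => decide (u = v)) = Pi.single (Sum.inl v) 1 := by
  funext t
  rcases t with u | ⟨e, he⟩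
  · by_cases h : u = v <;> simp [monomialPoint, h]
  · induction e using Sym2.ind with
    | _ a b =>
      rw [monomialPoint_inr_mk, Pi.single_eq_of_ne Sum.inr_ne_inl, if_neg]
      rintro ⟨ha, hb⟩
      exact G.ne_of_adj he ((of_decide_eq_true ha).trans (of_decide_eq_true hb).symm)

lemma monomialPoint_pair {j k : V} (hjk : s(j, k) ∈ G.edgeSet) :
    monomialPoint G (fun u => decide (u = j) || decide (u = k)) =
      Pi.single (Sum.inl j) 1 + Pi.single (Sum.inl k) 1 +
        Pi.single (Sum.inr ⟨s(j, k), hjk⟩) 1 := by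
  have hjk' := G.ne_of_adj hjk
  funext t
  rcases t with u | ⟨e, he⟩
  · simp only [monomialPoint, Pi.add_apply, Pi.single_apply, Sum.inl.injEq, reduceCtorEq]
    grind
  · induction e using Sym2.ind with
    | _ a b =>
      have hab := G.ne_of_adj he
      rw [monomialPoint_inr_mk]
      simp only [Bool.or_eq_true, decide_eq_true_eq, Pi.add_apply,
        Pi.single_eq_of_ne Sum.inr_ne_inl, zero_add]
      grind

lemma vectorSpan_range_monomialPoint : vectorSpan ℝ (range (monomialPoint G)) = ⊤ := by
  rw [vectorSpan_range_eq_span_range_vsub_right ℝ _ (fun _ => false), monomialPoint_false]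
  simp only [vsub_eq_sub, sub_zero]
  set S := Submodule.span ℝ (range (monomialPoint G))
  have hmem : ∀ I, monomialPoint G I ∈ S := fun I => Submodule.subset_span ⟨I, rfl⟩
  have hvertex : ∀ v : V, Pi.single (Sum.inl v) 1 ∈ S := fun v =>
    monomialPoint_single G v ▸ hmem _
  rw [eq_top_iff, ← (Pi.basisFun ℝ (V ⊕ G.edgeSet)).span_eq, Submodule.span_le]
  rintro _ ⟨v | ⟨e, he⟩, rfl⟩ <;> rw [Pi.basisFun_apply]
  · exact hvertex v
  · induction e using Sym2.ind with
    | _ j k =>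
      have hedge : Pi.single (Sum.inr ⟨s(j, k), he⟩) 1 =
          monomialPoint G (fun u => decide (u = j) || decide (u = k)) -
            Pi.single (Sum.inl j) 1 - Pi.single (Sum.inl k) 1 := by
        rw [monomialPoint_pair G he]
        abel
      rw [hedge]
      exact sub_mem (sub_mem (hmem _) (hvertex j)) (hvertex k)

lemma comp_apply_mem_affineFunctionsOf_monomialPoint (v : V) (F : Bool → ℝ) :
    (fun I => F (I v)) ∈ affineFunctionsOf ℝ (monomialPoint G) := by
  have hF : (fun I : V → Bool => F (I v)) = (fun _ => F false) +
      (F true - F false) • fun I => monomialPoint G I (Sum.inl v) := by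
    funext I
    cases hv : I v <;> simp [monomialPoint, hv]
  rw [hF]
  exact add_mem (const_mem_affineFunctionsOf _ _)
    (Submodule.smul_mem _ _ (apply_mem_affineFunctionsOf _ _))

lemma comp_apply₂_mem_affineFunctionsOf_monomialPoint {j k : V} (he : s(j, k) ∈ G.edgeSet)
    (F : Bool → Bool → ℝ) :
    (fun I => F (I j) (I k)) ∈ affineFunctionsOf ℝ (monomialPoint G) := by
  have hF : (fun I : V → Bool => F (I j) (I k)) = (fun _ => F false false) +
      (F true false - F false false) • (fun I => monomialPoint G I (Sum.inl j)) +
      (F false true - F false false) • (fun I => monomialPoint G I (Sum.inl k)) +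
      (F true true - F true false - F false true + F false false) •
        (fun I => monomialPoint G I (Sum.inr ⟨s(j, k), he⟩)) := by
    funext I
    simp only [Pi.add_apply, Pi.smul_apply, smul_eq_mul, monomialPoint_inr_mk]
    simp only [monomialPoint]
    cases I j <;> cases I k <;>
      simp only [Bool.false_eq_true, and_self, and_false, false_and, ↓reduceIte] <;> ring
  rw [hF]
  refine add_mem (add_mem (add_mem (const_mem_affineFunctionsOf _ _) ?_) ?_) ?_ <;>
    exact Submodule.smul_mem _ _ (apply_mem_affineFunctionsOf _ _)

lemma marginalPoint_apply_mem_affineFunctionsOf (c : Sym2 (V × Bool) ⊕ (V × Bool)) :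
    (fun I => marginalPoint G I c) ∈ affineFunctionsOf ℝ (monomialPoint G) := by
  classical
  rcases c with m | ⟨l, α⟩
  · induction m using Sym2.ind with
    | _ p q =>
      obtain ⟨j, α⟩ := p
      obtain ⟨k, β⟩ := q
      simp_rw [marginalPoint_inl_mk]
      by_cases h : G.Adj j k
      · exact comp_apply₂_mem_affineFunctionsOf_monomialPoint G h
          (fun a b => if G.Adj j k ∧ a = α ∧ b = β then 1 else 0)
      · simp only [h, false_and, if_false]
        exact zero_mem _
  · simp_rw [marginalPoint_inr]
    exact comp_apply_mem_affineFunctionsOf_monomialPoint G l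
      (fun b => if (∀ k, ¬ G.Adj l k) ∧ b = α then 1 else 0)

lemma monomialPoint_apply_mem_affineFunctionsOf (t : V ⊕ G.edgeSet) :
    (fun I => monomialPoint G I t) ∈ affineFunctionsOf ℝ (marginalPoint G) := by
  classical
  rcases t with v | ⟨e, he⟩
  · by_cases h : ∃ w, G.Adj v w
    · obtain ⟨w, hw⟩ := h
      have hv : (fun I => monomialPoint G I (Sum.inl v)) =
          (fun I => marginalPoint G I (Sum.inl s((v, true), (w, true)))) +
            (fun I => marginalPoint G I (Sum.inl s((v, true), (w, false)))) := by
        funext I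
        simp only [Pi.add_apply, marginalPoint_inl_mk]
        cases hv : I v <;> cases I w <;> simp [monomialPoint, hw, hv]
      rw [hv]
      exact add_mem (apply_mem_affineFunctionsOf _ _) (apply_mem_affineFunctionsOf _ _)
    · have hv : (fun I => monomialPoint G I (Sum.inl v)) =
          (fun I => marginalPoint G I (Sum.inr (v, true))) := by
        funext I
        push Not at h
        simp [marginalPoint_inr, monomialPoint, h]
      rw [hv]
      exact apply_mem_affineFunctionsOf _ _
  · induction e using Sym2.ind with
    | _ j k =>
      have he' : (fun I => monomialPoint G I (Sum.inr ⟨s(j, k), he⟩)) =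
          (fun I => marginalPoint G I (Sum.inl s((j, true), (k, true)))) := by
        funext I
        simp [monomialPoint_inr_mk, marginalPoint_inl_mk, G.mem_edgeSet.1 he]
      rw [he']
      exact apply_mem_affineFunctionsOf _ _

end

/-- the polytope `P_G = conv{a_I}` (equivalently, the affine span of the
points `a_I`) has dimension `n + |E(G)|` where `n` is the number of vertices of `G`. -/
theorem dim_affineSpan_marginalPoints {V : Type} [Fintype V] [DecidableEq V]
    (G : SimpleGraph V) :
    Module.finrank ℝ (affineSpan ℝ (Set.range (marginalPoint G))).direction =
      Fintype.card V + G.edgeSet.ncard := by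
  classical
  have hmonomial : finrank ℝ (affineSpan ℝ (range (monomialPoint G))).direction =
      Fintype.card V + G.edgeSet.ncard := by
    rw [direction_affineSpan, vectorSpan_range_monomialPoint, finrank_top,
      finrank_fintype_fun_eq_card, Fintype.card_sum,
      ← Nat.card_eq_fintype_card (α := G.edgeSet), Nat.card_coe_set_eq]
  rw [← hmonomial]
  exact le_antisymm
    (finrank_direction_affineSpan_range_le _ _ (marginalPoint_apply_mem_affineFunctionsOf G))
    (finrank_direction_affineSpan_range_le _ _ (monomialPoint_apply_mem_affineFunctionsOf G))

end BinaryGraphModels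
end

section
/- Define a sequence (d_n)_{n ≥ 1} of rational numbers by d₁ = 1 and d_{n+1} = (1/2) Σ_{i=1}^{n} binom(2n, 2i−1) · d_i · d_{n+1−i} for all n ≥ 1. Then for every real number x with |x| < π/√2, the series Σ_{n=1}^{∞} d_n · x^{2n−1}/(2n−1)! converges and its sum equals √2 · tan(x/√2). -/
/-!
The function `f z = √2 tan (z / √2)` is holomorphic on the disc `‖z‖ < π / √2`, vanishes at `0`
and solves `f' = 1 + f² / 2`. Differentiating this equation with Leibniz's rule shows that the
derivatives `a m = f⁽ᵐ⁾ 0` satisfy `a 0 = 0`, `a 1 = 1` and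
`a (n + 2) = ½ ∑ₖ C(n+1, k) a k a (n+1-k)`, which determines them. The sequence carrying `d (n + 1)`
at `2 n + 1` and `0` at the even places satisfies the same recurrence: for odd `n + 1` every
product has an even index, and for even `n + 1` the surviving terms are exactly the recurrence of
`d`. So the series in question is the Taylor series of `f` at `0`, which converges to `f` on the
whole disc.
-/

open Filter Finset Topology

theorem iteratedDeriv_add_two_of_deriv_eq {𝕜 : Type*} [NontriviallyNormedField 𝕜]
    {f : 𝕜 → 𝕜} {x a b : 𝕜} {n : ℕ} (hf : ContDiffAt 𝕜 (n + 1) f x)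
    (hderiv : deriv f =ᶠ[𝓝 x] fun z => a + b * f z ^ 2) :
    iteratedDeriv (n + 2) f x = b * ∑ k ∈ range (n + 2),
      (n + 1).choose k * iteratedDeriv k f x * iteratedDeriv (n + 1 - k) f x := by
  rw [iteratedDeriv_succ', hderiv.iteratedDeriv_eq, iteratedDeriv_const_add n.succ_pos,
    iteratedDeriv_const_mul_field]
  simp only [sq]
  rw [iteratedDeriv_fun_mul (by exact_mod_cast hf) (by exact_mod_cast hf)]

theorem Finset.sum_range_two_mul_add_one_of_even_eq_zero {M : Type*} [AddCommMonoid M]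
    (g : ℕ → M) (n : ℕ) (h : ∀ k, Even k → g k = 0) :
    ∑ k ∈ range (2 * n + 1), g k = ∑ i ∈ range n, g (2 * i + 1) := by
  induction n with
  | zero => simpa using h 0 .zero
  | succ n ih =>
    rw [sum_range_succ _ n, ← ih, show 2 * (n + 1) + 1 = 2 * n + 1 + 1 + 1 by ring,
      sum_range_succ, sum_range_succ, h (2 * n + 1 + 1) ⟨n + 1, by ring⟩, add_zero]

theorem eq_of_convolution_recurrence {R : Type*} [Semiring R] (c : R) {a b : ℕ → R}
    (h0 : a 0 = b 0) (h1 : a 1 = b 1)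
    (ha : ∀ n, a (n + 2) = c * ∑ k ∈ range (n + 2), (n + 1).choose k * a k * a (n + 1 - k))
    (hb : ∀ n, b (n + 2) = c * ∑ k ∈ range (n + 2), (n + 1).choose k * b k * b (n + 1 - k)) :
    a = b := by
  funext m
  induction m using Nat.strong_induction_on with
  | _ m ih =>
    match m with
    | 0 => exact h0
    | 1 => exact h1
    | n + 2 =>
      rw [ha, hb]
      congr 1
      refine sum_congr rfl fun k hk => ?_
      have hk := mem_range.mp hk
      rw [ih k hk, ih (n + 1 - k) (by omega)]

theorem Complex.cos_ne_zero_of_norm_lt {z : ℂ} (hz : ‖z‖ < Real.pi / 2) : Complex.cos z ≠ 0 := by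
  refine Complex.cos_ne_zero_iff.mpr fun k hk => hz.not_ge ?_
  have hk1 : (1 : ℝ) ≤ |2 * (k : ℝ) + 1| := by
    exact_mod_cast Int.one_le_abs (by omega : 2 * k + 1 ≠ 0)
  rw [hk, show (2 * (k : ℂ) + 1) * Real.pi / 2 = ((2 * (k : ℝ) + 1) * (Real.pi / 2) : ℝ) by
    push_cast; ring, Complex.norm_real, Real.norm_eq_abs, abs_mul,
    abs_of_pos (by positivity : 0 < Real.pi / 2)]
  nlinarith [Real.pi_pos]

theorem Complex.hasDerivAt_const_mul_tan_div {c z : ℂ} (hc : c ≠ 0)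
    (hcos : Complex.cos (z / c) ≠ 0) :
    HasDerivAt (fun w => c * Complex.tan (w / c))
      (1 + (c ^ 2)⁻¹ * (c * Complex.tan (z / c)) ^ 2) z := by
  refine (((Complex.hasDerivAt_tan hcos).comp z ((hasDerivAt_id z).div_const c)).const_mul
    c).congr_deriv ?_
  rw [Complex.tan_eq_sin_div_cos]
  field_simp
  linear_combination -Complex.cos_sq_add_sin_sq (z / c)

theorem Complex.hasSum_odd_taylorSeries_on_ball {f : ℂ → ℂ} {r : ℝ}
    (hf : DifferentiableOn ℂ f (Metric.ball 0 r)) (heven : ∀ m, Even m → iteratedDeriv m f 0 = 0)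
    {z : ℂ} (hz : z ∈ Metric.ball 0 r) :
    HasSum (fun n => iteratedDeriv (2 * n + 1) f 0 * z ^ (2 * n + 1) / (2 * n + 1).factorial)
      (f z) := by
  have hodd : Function.Injective fun n : ℕ => 2 * n + 1 := fun a b h => by simp_all
  have htaylor := Complex.hasSum_taylorSeries_on_ball hf hz
  rw [← hodd.hasSum_iff fun m hm => ?_] at htaylor
  · refine htaylor.congr_fun fun n => ?_
    simp only [sub_zero, smul_eq_mul, Function.comp_apply]
    ring
  · rw [range_two_mul_add_one ℕ, Set.mem_ofPred_eq, Nat.not_odd_iff_even] at hm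
    simp [heven m hm]

namespace BinaryGraphModels

def oddSpread (d : ℕ → ℚ) (m : ℕ) : ℚ := if Odd m then d (m / 2 + 1) else 0

theorem oddSpread_two_mul_add_one (d : ℕ → ℚ) (n : ℕ) : oddSpread d (2 * n + 1) = d (n + 1) := by
  rw [oddSpread, if_pos (odd_two_mul_add_one n)]
  congr 1
  omega

theorem oddSpread_of_even (d : ℕ → ℚ) {m : ℕ} (hm : Even m) : oddSpread d m = 0 :=
  if_neg (Nat.not_odd_iff_even.mpr hm)

theorem oddSpread_add_two (d : ℕ → ℚ)
    (hrec : ∀ n : ℕ, 1 ≤ n →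
      d (n + 1) = (1 / 2) * ∑ i ∈ Finset.Icc 1 n,
        (Nat.choose (2 * n) (2 * i - 1) : ℚ) * d i * d (n + 1 - i)) (n : ℕ) :
    oddSpread d (n + 2) = 1 / 2 * ∑ k ∈ range (n + 2),
      (n + 1).choose k * oddSpread d k * oddSpread d (n + 1 - k) := by
  rcases Nat.even_or_odd n with ⟨j, rfl⟩ | ⟨j, rfl⟩
  · have hzero : ∀ k ∈ range (j + j + 2),
        ((j + j + 1).choose k : ℚ) * oddSpread d k * oddSpread d (j + j + 1 - k) = 0 := by
      intro k hk
      rcases Nat.even_or_odd k with hk' | ⟨i, rfl⟩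
      · rw [oddSpread_of_even d hk', mul_zero, zero_mul]
      · have hi := mem_range.mp hk
        rw [oddSpread_of_even d (m := j + j + 1 - (2 * i + 1)) ⟨j - i, by omega⟩, mul_zero]
    rw [sum_eq_zero hzero, mul_zero, oddSpread_of_even d ⟨j + 1, by ring⟩]
  · rw [show 2 * j + 1 + 2 = 2 * (j + 1) + 1 by ring, oddSpread_two_mul_add_one,
      show 2 * j + 1 + 1 = 2 * (j + 1) by ring,
      sum_range_two_mul_add_one_of_even_eq_zero _ _ fun k hk => by
        rw [oddSpread_of_even d hk, mul_zero, zero_mul],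
      hrec (j + 1) (by omega), ← Ico_add_one_right_eq_Icc, sum_Ico_eq_sum_range]
    congr 1
    refine sum_congr rfl fun i hi => ?_
    have hi := mem_range.mp hi
    rw [show 2 * (j + 1) - (2 * i + 1) = 2 * (j - i) + 1 by omega, oddSpread_two_mul_add_one,
      oddSpread_two_mul_add_one, show 2 * (1 + i) - 1 = 2 * i + 1 by omega,
      show j + 1 + 1 - (1 + i) = j - i + 1 by omega, add_comm 1 i]

noncomputable def sqrtTwoTan (z : ℂ) : ℂ := Real.sqrt 2 * Complex.tan (z / Real.sqrt 2)

theorem cos_div_sqrt_two_ne_zero {z : ℂ} (hz : z ∈ Metric.ball 0 (Real.pi / Real.sqrt 2)) :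
    Complex.cos (z / Real.sqrt 2) ≠ 0 := by
  refine Complex.cos_ne_zero_of_norm_lt ?_
  rw [mem_ball_zero_iff] at hz
  rw [norm_div, Complex.norm_real, Real.norm_of_nonneg (Real.sqrt_nonneg 2),
    div_lt_iff₀ (Real.sqrt_pos.mpr two_pos)]
  calc ‖z‖ < Real.pi / Real.sqrt 2 := hz
    _ = Real.pi / 2 * Real.sqrt 2 := by
      field_simp
      rw [Real.sq_sqrt two_pos.le]

theorem hasDerivAt_sqrtTwoTan {z : ℂ} (hz : z ∈ Metric.ball 0 (Real.pi / Real.sqrt 2)) :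
    HasDerivAt sqrtTwoTan (1 + 2⁻¹ * sqrtTwoTan z ^ 2) z := by
  have h := Complex.hasDerivAt_const_mul_tan_div (by exact_mod_cast (Real.sqrt_pos.mpr two_pos).ne')
    (cos_div_sqrt_two_ne_zero hz)
  rwa [← Complex.ofReal_pow, Real.sq_sqrt two_pos.le, Complex.ofReal_ofNat] at h

theorem differentiableOn_sqrtTwoTan :
    DifferentiableOn ℂ sqrtTwoTan (Metric.ball 0 (Real.pi / Real.sqrt 2)) :=
  fun _ hz => (hasDerivAt_sqrtTwoTan hz).differentiableAt.differentiableWithinAt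

theorem iteratedDeriv_sqrtTwoTan (d : ℕ → ℚ) (h1 : d 1 = 1)
    (hrec : ∀ n : ℕ, 1 ≤ n →
      d (n + 1) = (1 / 2) * ∑ i ∈ Finset.Icc 1 n,
        (Nat.choose (2 * n) (2 * i - 1) : ℚ) * d i * d (n + 1 - i)) (m : ℕ) :
    iteratedDeriv m sqrtTwoTan 0 = oddSpread d m := by
  have hball : Metric.ball (0 : ℂ) (Real.pi / Real.sqrt 2) ∈ 𝓝 0 :=
    Metric.ball_mem_nhds 0 (by positivity)
  have hderiv : deriv sqrtTwoTan =ᶠ[𝓝 0] fun z => 1 + 2⁻¹ * sqrtTwoTan z ^ 2 :=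
    eventually_of_mem hball fun z hz => (hasDerivAt_sqrtTwoTan hz).deriv
  have hanalytic := differentiableOn_sqrtTwoTan.analyticAt hball
  have hzero : sqrtTwoTan 0 = 0 := by simp [sqrtTwoTan]
  refine congrFun (eq_of_convolution_recurrence (2⁻¹ : ℂ)
    (a := fun k => iteratedDeriv k sqrtTwoTan 0) (b := fun k => (oddSpread d k : ℂ)) ?_ ?_
    (fun n => iteratedDeriv_add_two_of_deriv_eq hanalytic.contDiffAt hderiv)
    (fun n => ?_)) m
  · simp [hzero, oddSpread]
  · simp [hderiv.eq_of_nhds, hzero, oddSpread, h1]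
  · rw [oddSpread_add_two d hrec]
    push_cast
    ring

/-- if `(d_n)` satisfies `d₁ = 1` and the convolution recurrence
`d_{n+1} = (1/2) Σ_{i=1}^{n} C(2n, 2i-1) d_i d_{n+1-i}`, then for every real `x` with
`|x| < π/√2` the series `Σ_{n≥1} d_n x^{2n-1}/(2n-1)!` converges, with sum
`√2 · tan(x/√2)`. -/
theorem chain_degree_generating_function (d : ℕ → ℚ) (h1 : d 1 = 1)
    (hrec : ∀ n : ℕ, 1 ≤ n →
      d (n + 1) = (1 / 2) * ∑ i ∈ Finset.Icc 1 n,
        (Nat.choose (2 * n) (2 * i - 1) : ℚ) * d i * d (n + 1 - i)) :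
    ∀ x : ℝ, |x| < Real.pi / Real.sqrt 2 →
      HasSum
        (fun n : ℕ =>
          (d (n + 1) : ℝ) * x ^ (2 * (n + 1) - 1) / (Nat.factorial (2 * (n + 1) - 1)))
        (Real.sqrt 2 * Real.tan (x / Real.sqrt 2)) := by
  intro x hx
  have hx' : (x : ℂ) ∈ Metric.ball 0 (Real.pi / Real.sqrt 2) := by simpa using hx
  have htaylor := Complex.hasSum_odd_taylorSeries_on_ball differentiableOn_sqrtTwoTan
    (fun m hm => by rw [iteratedDeriv_sqrtTwoTan d h1 hrec, oddSpread_of_even d hm,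
      Rat.cast_zero]) hx'
  rw [← Complex.hasSum_ofReal]
  convert htaylor using 1
  · funext n
    rw [iteratedDeriv_sqrtTwoTan d h1 hrec, oddSpread_two_mul_add_one,
      show 2 * (n + 1) - 1 = 2 * n + 1 by omega]
    push_cast
    rfl
  · simp [sqrtTwoTan, Complex.ofReal_tan]

end BinaryGraphModels
end
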